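/- arXiv:0805.0629 — 4 statements merged into one kernel-verified Lean document; each statement's English description precedes it below -/
import Mathlib

section
/- Let M be an equilateral convex polygon with n ≥ 4 vertices and interior angles α₁,…,αₙ in cyclic order. Then at least two of the angles are local minima (i.e., αᵢ ≤ αᵢ₋₁ and αᵢ ≤ αᵢ₊₁ for at least two indices i, taken cyclically) and at least two are local maxima. -/
noncomputable def planeDet (u v : ℂ) : ℝ := u.re * v.im - u.im * v.re

def IsConvexPolygon {n : ℕ} (V : ZMod n → ℂ) : Prop :=
  ∀ i j : ZMod n, j ≠ i → j ≠ i + 1 → 0 < planeDet (V (i + 1) - V i) (V j - V i)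

/-!
Let `τ k` be the tangent of half the turning angle at vertex `k`, so that the interior angle
there is `π - 2 arctan (τ k)`; local minima of the angles are local maxima of `τ` and vice versa.
When all edges `e k = V (k + 1) - V k` have the same length, `τ k • (e (k - 1) + e k)` is the
rotation `I * (e (k - 1) - e k)`, which telescopes to `∑ τ k • (V (k + 1) - V (k - 1)) = 0`.
After summation by parts, the differences `τ (k + 1) - τ k` are orthogonal to every affine
function of the edge midpoints. If `τ` had a single local maximum `g`, these differences would
be `≤ 0` along the edges from `g` to some vertex `a` and `> 0` along the edges from `a` back to
`g`. By convexity the affine function vanishing on the chord `V g V a` has opposite signs on the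
two chains, contradicting the orthogonality. The same argument applies to `-τ`.
-/

open Real Finset

section PlaneDet

@[simp] lemma planeDet_self (u : ℂ) : planeDet u u = 0 := by
  simp only [planeDet]; ring

@[simp] lemma planeDet_zero_right (u : ℂ) : planeDet u 0 = 0 := by
  simp [planeDet]

lemma planeDet_anticomm (u v : ℂ) : -planeDet u v = planeDet v u := by
  simp only [planeDet]; ring

lemma planeDet_sub_right (w u v : ℂ) : planeDet w (u - v) = planeDet w u - planeDet w v := by
  simp only [planeDet, Complex.sub_re, Complex.sub_im]; ring

lemma planeDet_add_right (w u v : ℂ) : planeDet w (u + v) = planeDet w u + planeDet w v := by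
  simp only [planeDet, Complex.add_re, Complex.add_im]; ring

lemma planeDet_sum_smul {ι : Type*} (s : Finset ι) (w : ℂ) (c : ι → ℝ) (x : ι → ℂ) :
    planeDet w (∑ i ∈ s, c i • x i) = ∑ i ∈ s, c i * planeDet w (x i) := by
  simp only [planeDet, Complex.re_sum, Complex.im_sum, Complex.smul_re, Complex.smul_im,
    smul_eq_mul, mul_sum, ← sum_sub_distrib]
  congr 1 with i; ring

lemma planeDet_sq_add_inner_sq (u v : ℂ) :
    planeDet u v ^ 2 + inner ℝ u v ^ 2 = (‖u‖ * ‖v‖) ^ 2 := by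
  simp only [planeDet, Complex.inner, mul_pow, Complex.sq_norm, Complex.normSq_apply,
    Complex.mul_re, Complex.conj_re, Complex.conj_im]
  ring

lemma planeDet_sub_sub_rotate (A B C : ℂ) :
    planeDet (B - A) (C - A) = planeDet (C - B) (A - B) := by
  simp only [planeDet, Complex.sub_re, Complex.sub_im]; ring

/-- Counterclockwise order is transitive among vectors of an open half-plane. -/
lemma planeDet_pos_trans {u x y z : ℂ} (hux : 0 ≤ planeDet u x) (huy : 0 < planeDet u y)
    (huz : 0 < planeDet u z) (hxy : 0 < planeDet x y) (hyz : 0 < planeDet y z) :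
    0 < planeDet x z := by
  have plucker : planeDet u y * planeDet x z =
      planeDet u x * planeDet y z + planeDet u z * planeDet x y := by
    simp only [planeDet]; ring
  have : 0 < planeDet u y * planeDet x z := by rw [plucker]; positivity
  exact pos_of_mul_pos_right this huy.le

end PlaneDet

section TanHalfAngle

noncomputable def tanHalfAngle (u v : ℂ) : ℝ := planeDet u v / (‖u‖ * ‖v‖ + inner ℝ u v)

lemma norm_mul_norm_add_inner_pos {u v : ℂ} (h : planeDet u v ≠ 0) :
    0 < ‖u‖ * ‖v‖ + inner ℝ u v := by
  have hlag := planeDet_sq_add_inner_sq u v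
  have : inner ℝ u v ^ 2 < (‖u‖ * ‖v‖) ^ 2 := by
    have := pow_pos (abs_pos.2 h) 2; rw [sq_abs] at this; linarith
  have := abs_lt_of_sq_lt_sq' this (by positivity)
  linarith [this.1]

lemma tanHalfAngle_smul_add {u v : ℂ} (huv : ‖u‖ = ‖v‖) (h : planeDet u v ≠ 0) :
    tanHalfAngle u v • (u + v) = Complex.I * (u - v) := by
  have hden := (norm_mul_norm_add_inner_pos h).ne'
  have hu : u.re ^ 2 + u.im ^ 2 = ‖u‖ * ‖v‖ := by
    rw [← huv, ← sq, Complex.sq_norm, Complex.normSq_apply]; ring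
  have hv : v.re ^ 2 + v.im ^ 2 = ‖u‖ * ‖v‖ := by
    rw [huv, ← sq, Complex.sq_norm, Complex.normSq_apply]; ring
  rw [tanHalfAngle, ← inv_smul_smul₀ hden (Complex.I * (u - v)), div_eq_inv_mul, mul_smul]
  congr 1
  apply Complex.ext
  · simp only [Complex.smul_re, Complex.add_re, Complex.mul_re, Complex.I_re, Complex.I_im,
      Complex.sub_re, Complex.sub_im, smul_eq_mul, planeDet, Complex.inner, Complex.conj_re,
      Complex.conj_im]
    linear_combination v.im * hu - u.im * hv
  · simp only [Complex.smul_im, Complex.add_im, Complex.mul_im, Complex.I_re, Complex.I_im,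
      Complex.sub_re, Complex.sub_im, smul_eq_mul, planeDet, Complex.inner, Complex.mul_re,
      Complex.conj_re, Complex.conj_im]
    linear_combination u.re * hv - v.re * hu

lemma angle_eq_two_mul_arctan_tanHalfAngle {u v : ℂ} (h : 0 < planeDet u v) :
    InnerProductGeometry.angle u v = 2 * arctan (tanHalfAngle u v) := by
  have hden := norm_mul_norm_add_inner_pos h.ne'
  have hN : ‖u‖ * ‖v‖ ≠ 0 := by
    intro h0; have := planeDet_sq_add_inner_sq u v; rw [h0] at this; nlinarith
  have ht : 0 ≤ tanHalfAngle u v := div_nonneg h.le hden.le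
  apply injOn_cos ⟨InnerProductGeometry.angle_nonneg u v, InnerProductGeometry.angle_le_pi u v⟩
    ⟨by positivity, by linarith [arctan_lt_pi_div_two (tanHalfAngle u v)]⟩
  rw [InnerProductGeometry.cos_angle, cos_two_mul, cos_sq_arctan, tanHalfAngle]
  have hlag := planeDet_sq_add_inner_sq u v
  obtain ⟨hu, hv⟩ := mul_ne_zero_iff.1 hN
  field_simp
  linear_combination (inner ℝ u v + ‖u‖ * ‖v‖) * hlag

end TanHalfAngle

lemma ZMod.natCast_ne_natCast_of_lt {n x y : ℕ} (hx : x < n) (hy : y < n) (h : x ≠ y) :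
    (x : ZMod n) ≠ y := by
  rwa [Ne, ZMod.natCast_eq_natCast_iff', Nat.mod_eq_of_lt hx, Nat.mod_eq_of_lt hy]

lemma ZMod.sum_eq_sum_range_add {n : ℕ} [NeZero n] {M : Type*} [AddCommMonoid M]
    (f : ZMod n → M) (g : ZMod n) : ∑ k, f k = ∑ l ∈ range n, f (g + l) := by
  refine sum_nbij' (fun k => (k - g).val) (fun l => g + l)
    (fun k _ => mem_range.2 (ZMod.val_lt _)) (fun _ _ => mem_univ _) (fun k _ => ?_)
    (fun l hl => ?_) (fun k _ => ?_)
  · simp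
  · simp [ZMod.val_cast_of_lt (mem_range.1 hl)]
  · simp

lemma ZMod.sum_sub_smul_add {n : ℕ} [NeZero n] {R E : Type*} [Ring R] [AddCommGroup E]
    [Module R E] (φ : ZMod n → R) (V : ZMod n → E) :
    ∑ k, (φ (k + 1) - φ k) • (V k + V (k + 1)) = -∑ k, φ k • (V (k + 1) - V (k - 1)) := by
  have hshift : ∑ k, φ (k + 1) • (V k + V (k + 1)) = ∑ k, φ k • (V (k - 1) + V k) := by
    rw [← Equiv.sum_comp (Equiv.addRight (1 : ZMod n)) (fun k => φ k • (V (k - 1) + V k))]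
    simp
  calc ∑ k, (φ (k + 1) - φ k) • (V k + V (k + 1))
      = ∑ k, φ (k + 1) • (V k + V (k + 1)) - ∑ k, φ k • (V k + V (k + 1)) := by
        simp only [sub_smul, sum_sub_distrib]
    _ = ∑ k, φ k • (V (k - 1) + V k) - ∑ k, φ k • (V k + V (k + 1)) := by rw [hshift]
    _ = -∑ k, φ k • (V (k + 1) - V (k - 1)) := by
        rw [← sum_sub_distrib, ← sum_neg_distrib]
        congr 1 with k
        rw [← smul_sub, ← smul_neg]
        abel_nf

lemma sum_mul_add_succ_ne_zero {n m : ℕ} {d s : ℕ → ℝ} (hn : 3 ≤ n) (hmn : m < n)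
    (hs0 : s 0 = 0) (hsm : s m = 0) (hsn : s n = 0)
    (hs_neg : ∀ l, 0 < l → l < m → s l < 0) (hs_pos : ∀ l, m < l → l < n → 0 < s l)
    (hd_nonpos : ∀ l < m, d l ≤ 0) (hd_pos : ∀ l, m ≤ l → l < n → 0 < d l)
    (hd : ∑ l ∈ range n, d l = 0) :
    ∑ l ∈ range n, d l * (s l + s (l + 1)) ≠ 0 := by
  intro hsum
  have hs_nonpos : ∀ l ≤ m, s l ≤ 0 := fun l hl => by
    rcases Nat.eq_zero_or_pos l with rfl | hl0
    · exact hs0.le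
    rcases hl.lt_or_eq with hlm | rfl
    · exact (hs_neg l hl0 hlm).le
    · exact hsm.le
  have hs_nonneg : ∀ l, m ≤ l → l ≤ n → 0 ≤ s l := fun l hml hln => by
    rcases hml.lt_or_eq with hml | rfl
    rcases hln.lt_or_eq with hln | rfl
    · exact (hs_pos l hml hln).le
    · exact hsn.ge
    · exact hsm.ge
  have hterm : ∀ l ∈ range n, 0 ≤ d l * (s l + s (l + 1)) := fun l hl => by
    rw [mem_range] at hl
    rcases lt_or_ge l m with hlm | hml
    · exact mul_nonneg_of_nonpos_of_nonpos (hd_nonpos l hlm)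
        (add_nonpos (hs_nonpos l hlm.le) (hs_nonpos (l + 1) hlm))
    · exact mul_nonneg (hd_pos l hml hl).le
        (add_nonneg (hs_nonneg l hml hl.le) (hs_nonneg (l + 1) (by omega) hl))
  -- All products are `≥ 0`, hence all vanish: this forces `m = n - 1` and then `d = 0` below `m`.
  have hzero := (sum_eq_zero_iff_of_nonneg hterm).1 hsum
  have hm_last : m + 1 = n := by
    by_contra h
    have hf : 0 < s m + s (m + 1) := by
      rw [hsm, zero_add]; exact hs_pos (m + 1) (by omega) (by omega)
    exact (mul_pos (hd_pos m le_rfl hmn) hf).ne' (hzero m (mem_range.2 hmn))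
  have hd_zero : ∀ l < m, d l = 0 := fun l hl => by
    have hf : s l + s (l + 1) < 0 := by
      rcases Nat.eq_zero_or_pos l with rfl | hl0
      · rw [hs0, zero_add]; exact hs_neg 1 one_pos (by omega)
      · exact add_neg_of_neg_of_nonpos (hs_neg l hl0 hl) (hs_nonpos (l + 1) hl)
    exact (mul_eq_zero.1 (hzero l (mem_range.2 (by omega)))).resolve_right hf.ne
  rw [← hm_last, sum_range_succ, sum_eq_zero fun l hl => hd_zero l (mem_range.1 hl),
    zero_add] at hd
  exact (hd_pos m le_rfl hmn).ne' hd

section CyclicSequence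

variable {n : ℕ} {β : Type*}

def IsCyclicLocalMax [Preorder β] (φ : ZMod n → β) (i : ZMod n) : Prop :=
  φ (i - 1) ≤ φ i ∧ φ (i + 1) ≤ φ i

def DescendsThenAscends [Preorder β] (φ : ZMod n → β) (g : ZMod n) (m : ℕ) : Prop :=
  0 < m ∧ m < n ∧ (∀ l < m, φ (g + (l + 1 : ℕ)) ≤ φ (g + l)) ∧
    ∀ l, m ≤ l → l < n → φ (g + l) < φ (g + (l + 1 : ℕ))

/-- Starting from a global maximum `g`, a second local maximum is the first index after which
the sequence stops increasing, once it has started to. -/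
theorem exists_ne_isCyclicLocalMax_of_forall_not_descendsThenAscends [LinearOrder β]
    (hn : 2 ≤ n) (φ : ZMod n → β) (h : ∀ g m, ¬DescendsThenAscends φ g m) :
    ∃ i j, i ≠ j ∧ IsCyclicLocalMax φ i ∧ IsCyclicLocalMax φ j := by
  have : NeZero n := ⟨by omega⟩
  obtain ⟨g, hg⟩ := Finite.exists_max φ
  by_contra! hone
  have huniq : ∀ l, 0 < l → l < n → ¬IsCyclicLocalMax φ (g + l) := fun l hl hln hmax =>
    hone (g + l) g (by simpa using ZMod.natCast_ne_natCast_of_lt hln (by omega) hl.ne')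
      hmax ⟨hg _, hg _⟩
  by_cases hasc : ∃ l, l < n ∧ φ (g + l) < φ (g + (l + 1 : ℕ))
  · classical
    obtain ⟨hmn, hm_asc⟩ := Nat.find_spec hasc
    refine h g (Nat.find hasc) ⟨Nat.pos_of_ne_zero fun h0 => ?_, hmn, fun l hl => ?_, ?_⟩
    · rw [h0] at hm_asc
      exact (hg _).not_gt (by simpa using hm_asc)
    · exact not_lt.1 fun h' => Nat.find_min hasc hl ⟨by omega, h'⟩
    · intro l hml
      induction l, hml using Nat.le_induction with
      | base => exact fun _ => hm_asc
      | succ l hml ih =>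
        intro hln
        refine lt_of_not_ge fun hle => huniq (l + 1) (by omega) hln ⟨?_, ?_⟩
        · simpa [← add_assoc] using (ih (by omega)).le
        · simpa [add_assoc, one_add_one_eq_two] using hle
  · push Not at hasc
    have hchain : ∀ l, 1 ≤ l → l ≤ n → φ (g + l) ≤ φ (g + 1) := by
      intro l hl
      induction l, hl using Nat.le_induction with
      | base => simp
      | succ l hl ih => exact fun hln => (hasc l (by omega)).trans (ih (by omega))
    have h1 : φ (g + 1) = φ g := le_antisymm (hg _) (by simpa using hchain n (by omega) le_rfl)
    refine huniq 1 one_pos (by omega) ⟨?_, ?_⟩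
    · simp [h1]
    · simpa [h1, add_assoc, one_add_one_eq_two] using hasc 1 (by omega)

end CyclicSequence

section ConvexPolygon

variable {n : ℕ} {V : ZMod n → ℂ}

lemma IsConvexPolygon.planeDet_edge_edge_pos (hV : IsConvexPolygon V) (hn : 3 ≤ n)
    (k : ZMod n) : 0 < planeDet (V k - V (k - 1)) (V (k + 1) - V k) := by
  have h2 : ((2 : ℕ) : ZMod n) ≠ (0 : ℕ) :=
    ZMod.natCast_ne_natCast_of_lt (by omega) (by omega) two_ne_zero
  have h1 : ((1 : ℕ) : ZMod n) ≠ (0 : ℕ) :=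
    ZMod.natCast_ne_natCast_of_lt (by omega) (by omega) one_ne_zero
  push_cast at h1 h2
  have := hV (k - 1) (k + 1) (fun h => h2 (by linear_combination h))
    (fun h => h1 (by linear_combination h))
  rw [sub_add_cancel] at this
  convert this using 1
  simp only [planeDet, Complex.sub_re, Complex.sub_im]; ring

-- Each step `a + r → a + r + 1` turns counterclockwise about `V a`, and every vertex lies left of
-- the edge at `a`, so `planeDet_pos_trans` chains the steps.
lemma IsConvexPolygon.planeDet_sub_pos (hV : IsConvexPolygon V) (a : ZMod n) {p q : ℕ}
    (hp : 0 < p) (hpq : p < q) (hqn : q < n) :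
    0 < planeDet (V (a + p) - V a) (V (a + q) - V a) := by
  have hne : ∀ {r s : ℕ}, r < n → s < n → r ≠ s → a + (r : ZMod n) ≠ a + s := fun hr hs hrs h =>
    ZMod.natCast_ne_natCast_of_lt hr hs hrs (add_left_cancel h)
  have hfirst : ∀ r, 2 ≤ r → r < n → 0 < planeDet (V (a + (1 : ℕ)) - V a) (V (a + r) - V a) := by
    intro r hr hrn
    have := hV a (a + r) (by simpa using hne hrn (by omega : 0 < n) (by omega))
      (by simpa using hne hrn (by omega : 1 < n) (by omega))
    simpa using this
  have hstep : ∀ r, 0 < r → r + 1 < n →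
      0 < planeDet (V (a + r) - V a) (V (a + (r + 1 : ℕ)) - V a) := by
    intro r hr hrn
    have := hV (a + r) a (by simpa using (hne (by omega) (by omega) (by omega : 0 ≠ r)))
      (by simpa [add_assoc] using (hne (by omega) hrn (by omega : 0 ≠ r + 1)))
    rw [planeDet_sub_sub_rotate]
    push_cast
    rwa [← add_assoc]
  induction q, hpq using Nat.le_induction with
  | base => exact hstep p hp hqn
  | succ q hpq ih =>
    refine planeDet_pos_trans (u := V (a + (1 : ℕ)) - V a) ?_ (hfirst q (by omega) (by omega))
      (hfirst (q + 1) (by omega) hqn) (ih (by omega)) (hstep q (by omega) hqn)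
    rcases (show p = 1 ∨ 2 ≤ p by omega) with rfl | hp2
    · simp
    · exact (hfirst p hp2 (by omega)).le

noncomputable def tanHalfTurn (V : ZMod n → ℂ) (k : ZMod n) : ℝ :=
  tanHalfAngle (V k - V (k - 1)) (V (k + 1) - V k)

lemma IsConvexPolygon.angle_eq_pi_sub_two_mul_arctan (hV : IsConvexPolygon V) (hn : 3 ≤ n)
    (k : ZMod n) :
    EuclideanGeometry.angle (V (k - 1)) (V k) (V (k + 1)) = π - 2 * arctan (tanHalfTurn V k) := by
  rw [tanHalfTurn, ← angle_eq_two_mul_arctan_tanHalfAngle (hV.planeDet_edge_edge_pos hn k),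
    ← InnerProductGeometry.angle_neg_left, neg_sub]
  rfl

lemma IsConvexPolygon.angle_le_angle_iff (hV : IsConvexPolygon V) (hn : 3 ≤ n) (i j : ZMod n) :
    EuclideanGeometry.angle (V (i - 1)) (V i) (V (i + 1)) ≤
        EuclideanGeometry.angle (V (j - 1)) (V j) (V (j + 1)) ↔
      tanHalfTurn V j ≤ tanHalfTurn V i := by
  rw [hV.angle_eq_pi_sub_two_mul_arctan hn, hV.angle_eq_pi_sub_two_mul_arctan hn,
    sub_le_sub_iff_left, mul_le_mul_iff_of_pos_left two_pos, arctan_strictMono.le_iff_le]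

lemma IsConvexPolygon.angle_le_neighbours_of_isCyclicLocalMax (hV : IsConvexPolygon V)
    (hn : 3 ≤ n) {i : ZMod n} (h : IsCyclicLocalMax (tanHalfTurn V) i) :
    EuclideanGeometry.angle (V (i - 1)) (V i) (V (i + 1)) ≤
        EuclideanGeometry.angle (V (i - 2)) (V (i - 1)) (V i) ∧
      EuclideanGeometry.angle (V (i - 1)) (V i) (V (i + 1)) ≤
        EuclideanGeometry.angle (V i) (V (i + 1)) (V (i + 2)) := by
  have hpred := (hV.angle_le_angle_iff hn i (i - 1)).2 h.1
  have hsucc := (hV.angle_le_angle_iff hn i (i + 1)).2 h.2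
  rw [sub_sub, one_add_one_eq_two, sub_add_cancel] at hpred
  rw [add_assoc, one_add_one_eq_two, add_sub_cancel_right] at hsucc
  exact ⟨hpred, hsucc⟩

lemma IsConvexPolygon.neighbours_le_angle_of_isCyclicLocalMax_neg (hV : IsConvexPolygon V)
    (hn : 3 ≤ n) {i : ZMod n} (h : IsCyclicLocalMax (-tanHalfTurn V) i) :
    EuclideanGeometry.angle (V (i - 2)) (V (i - 1)) (V i) ≤
        EuclideanGeometry.angle (V (i - 1)) (V i) (V (i + 1)) ∧
      EuclideanGeometry.angle (V i) (V (i + 1)) (V (i + 2)) ≤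
        EuclideanGeometry.angle (V (i - 1)) (V i) (V (i + 1)) := by
  have hpred := (hV.angle_le_angle_iff hn (i - 1) i).2 (neg_le_neg_iff.1 h.1)
  have hsucc := (hV.angle_le_angle_iff hn (i + 1) i).2 (neg_le_neg_iff.1 h.2)
  rw [sub_sub, one_add_one_eq_two, sub_add_cancel] at hpred
  rw [add_assoc, one_add_one_eq_two, add_sub_cancel_right] at hsucc
  exact ⟨hpred, hsucc⟩

variable [NeZero n]

lemma IsConvexPolygon.sum_tanHalfTurn_smul (hV : IsConvexPolygon V) (hn : 3 ≤ n)
    (hequi : ∀ i j : ZMod n, dist (V i) (V (i + 1)) = dist (V j) (V (j + 1))) :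
    ∑ k, tanHalfTurn V k • (V (k + 1) - V (k - 1)) = 0 := by
  have hterm : ∀ k, tanHalfTurn V k • (V (k + 1) - V (k - 1)) =
      Complex.I * (V k - V (k - 1)) - Complex.I * (V (k + 1) - V k) := by
    intro k
    have hnorm : ‖V k - V (k - 1)‖ = ‖V (k + 1) - V k‖ := by
      simpa only [sub_add_cancel, dist_eq_norm'] using hequi (k - 1) k
    rw [← mul_sub, ← tanHalfAngle_smul_add hnorm (hV.planeDet_edge_edge_pos hn k).ne',
      tanHalfTurn]
    congr 1; ring
  rw [sum_congr rfl fun k _ => hterm k, sum_sub_distrib, sub_eq_zero,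
    ← Equiv.sum_comp (Equiv.addRight (1 : ZMod n))]
  simp

/-- Pair the differences of `φ` with the signed distances of the edge midpoints from the chord
through `V g` and `V (g + m)`: a descent-ascent pattern gives every product the same sign. -/
theorem IsConvexPolygon.not_descendsThenAscends (hV : IsConvexPolygon V) (hn : 3 ≤ n)
    {φ : ZMod n → ℝ} (hφ : ∑ k, φ k • (V (k + 1) - V (k - 1)) = 0) (g : ZMod n) (m : ℕ) :
    ¬DescendsThenAscends φ g m := by
  rintro ⟨hm, hmn, hdesc, hasc⟩
  set D := V (g + m) - V g
  set d : ℕ → ℝ := fun l => φ (g + (l + 1 : ℕ)) - φ (g + l)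
  have hparts : ∑ l ∈ range n, d l • (V (g + l) + V (g + (l + 1 : ℕ))) = 0 := by
    have := ZMod.sum_sub_smul_add φ V
    rw [hφ, neg_zero, ZMod.sum_eq_sum_range_add _ g] at this
    simpa [d, add_assoc] using this
  have hd : ∑ l ∈ range n, d l = 0 := by
    rw [sum_range_sub (fun l => φ (g + l))]
    simp
  refine sum_mul_add_succ_ne_zero (s := fun l => planeDet D (V (g + l) - V g)) (d := d) hn hmn
    (by simp) (by simp [D]) (by simp) (fun l hl hlm => ?_)
    (fun l hml hln => hV.planeDet_sub_pos g hm hml hln) (fun l hl => sub_nonpos.2 (hdesc l hl))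
    (fun l hml hln => sub_pos.2 (hasc l hml hln)) hd ?_
  · rw [← planeDet_anticomm, neg_neg_iff_pos]
    exact hV.planeDet_sub_pos g hl hlm hmn
  · have hs : ∀ l : ℕ, planeDet D (V (g + l) - V g) + planeDet D (V (g + (l + 1 : ℕ)) - V g) =
        planeDet D (V (g + l) + V (g + (l + 1 : ℕ))) - 2 * planeDet D (V g) := by
      intro l
      simp only [planeDet_sub_right, planeDet_add_right]
      ring
    simp only [hs, mul_sub, sum_sub_distrib, ← sum_mul, hd, ← planeDet_sum_smul, hparts]
    simp

theorem IsConvexPolygon.exists_ne_isCyclicLocalMax (hV : IsConvexPolygon V) (hn : 3 ≤ n)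
    {φ : ZMod n → ℝ} (hφ : ∑ k, φ k • (V (k + 1) - V (k - 1)) = 0) :
    ∃ i j, i ≠ j ∧ IsCyclicLocalMax φ i ∧ IsCyclicLocalMax φ j :=
  exists_ne_isCyclicLocalMax_of_forall_not_descendsThenAscends (by omega) φ
    (hV.not_descendsThenAscends hn hφ)

end ConvexPolygon

theorem equilateral_convex_polygon_four_angle_extrema_general (n : ℕ) (hn : 4 ≤ n)
    (V : ZMod n → ℂ) (hconv : IsConvexPolygon V)
    (hequi : ∀ i j : ZMod n, dist (V i) (V (i + 1)) = dist (V j) (V (j + 1))) :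
    (∃ i j : ZMod n, i ≠ j ∧
      (EuclideanGeometry.angle (V (i - 1)) (V i) (V (i + 1)) ≤
        EuclideanGeometry.angle (V (i - 2)) (V (i - 1)) (V i) ∧
       EuclideanGeometry.angle (V (i - 1)) (V i) (V (i + 1)) ≤
        EuclideanGeometry.angle (V i) (V (i + 1)) (V (i + 2))) ∧
      (EuclideanGeometry.angle (V (j - 1)) (V j) (V (j + 1)) ≤
        EuclideanGeometry.angle (V (j - 2)) (V (j - 1)) (V j) ∧
       EuclideanGeometry.angle (V (j - 1)) (V j) (V (j + 1)) ≤
        EuclideanGeometry.angle (V j) (V (j + 1)) (V (j + 2)))) ∧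
    (∃ i j : ZMod n, i ≠ j ∧
      (EuclideanGeometry.angle (V (i - 2)) (V (i - 1)) (V i) ≤
        EuclideanGeometry.angle (V (i - 1)) (V i) (V (i + 1)) ∧
       EuclideanGeometry.angle (V i) (V (i + 1)) (V (i + 2)) ≤
        EuclideanGeometry.angle (V (i - 1)) (V i) (V (i + 1))) ∧
      (EuclideanGeometry.angle (V (j - 2)) (V (j - 1)) (V j) ≤
        EuclideanGeometry.angle (V (j - 1)) (V j) (V (j + 1)) ∧
       EuclideanGeometry.angle (V j) (V (j + 1)) (V (j + 2)) ≤
        EuclideanGeometry.angle (V (j - 1)) (V j) (V (j + 1)))) := by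
  have : NeZero n := ⟨by omega⟩
  have h3 : 3 ≤ n := by omega
  have hmom := hconv.sum_tanHalfTurn_smul h3 hequi
  obtain ⟨i, j, hij, hi, hj⟩ := hconv.exists_ne_isCyclicLocalMax h3 hmom
  obtain ⟨i', j', hij', hi', hj'⟩ :=
    hconv.exists_ne_isCyclicLocalMax h3 (φ := -tanHalfTurn V)
      (by simp only [Pi.neg_apply, neg_smul, sum_neg_distrib, hmom, neg_zero])
  exact ⟨⟨i, j, hij, hconv.angle_le_neighbours_of_isCyclicLocalMax h3 hi,
      hconv.angle_le_neighbours_of_isCyclicLocalMax h3 hj⟩,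
    ⟨i', j', hij', hconv.neighbours_le_angle_of_isCyclicLocalMax_neg h3 hi',
      hconv.neighbours_le_angle_of_isCyclicLocalMax_neg h3 hj'⟩⟩

/-- In an equilateral convex polygon with `n ≥ 4` vertices, the cyclic
sequence of interior angles has at least two local minima and at least two local maxima. -/
theorem equilateral_convex_polygon_four_angle_extrema (n : ℕ) [NeZero n] (hn : 4 ≤ n)
    (V : ZMod n → ℂ) (hconv : IsConvexPolygon V)
    (hequi : ∀ i j : ZMod n, dist (V i) (V (i + 1)) = dist (V j) (V (j + 1))) :
    (∃ i j : ZMod n, i ≠ j ∧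
      (EuclideanGeometry.angle (V (i - 1)) (V i) (V (i + 1)) ≤
        EuclideanGeometry.angle (V (i - 2)) (V (i - 1)) (V i) ∧
       EuclideanGeometry.angle (V (i - 1)) (V i) (V (i + 1)) ≤
        EuclideanGeometry.angle (V i) (V (i + 1)) (V (i + 2))) ∧
      (EuclideanGeometry.angle (V (j - 1)) (V j) (V (j + 1)) ≤
        EuclideanGeometry.angle (V (j - 2)) (V (j - 1)) (V j) ∧
       EuclideanGeometry.angle (V (j - 1)) (V j) (V (j + 1)) ≤
        EuclideanGeometry.angle (V j) (V (j + 1)) (V (j + 2)))) ∧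
    (∃ i j : ZMod n, i ≠ j ∧
      (EuclideanGeometry.angle (V (i - 2)) (V (i - 1)) (V i) ≤
        EuclideanGeometry.angle (V (i - 1)) (V i) (V (i + 1)) ∧
       EuclideanGeometry.angle (V i) (V (i + 1)) (V (i + 2)) ≤
        EuclideanGeometry.angle (V (i - 1)) (V i) (V (i + 1))) ∧
      (EuclideanGeometry.angle (V (j - 2)) (V (j - 1)) (V j) ≤
        EuclideanGeometry.angle (V (j - 1)) (V j) (V (j + 1)) ∧
       EuclideanGeometry.angle (V j) (V (j + 1)) (V (j + 2)) ≤
        EuclideanGeometry.angle (V (j - 1)) (V j) (V (j + 1)))) :=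
  equilateral_convex_polygon_four_angle_extrema_general n hn V hconv hequi
end

section
/- Let M be a convex polygon with n ≥ 4 vertices whose interior angles are all equal, with side lengths s₁,…,sₙ in cyclic order. Then at least two of the side lengths are local minima of the cyclic sequence (sᵢ ≤ sᵢ₋₁ and sᵢ ≤ sᵢ₊₁) and at least two are local maxima. -/
/-!
Equiangularity and convexity make every side direction the previous one turned by a fixed angle
`α ∈ (0, π)`. Convexity, averaged over all starting vertices, forces the partial sums of
`sin (k α)` to be positive, which singles out `α = 2π/n`; closing the polygon then gives
`∑ sₖ ζᵏ = 0` for the side lengths `sₖ` and `ζ = exp (2πi/n)`.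

Read from a local minimum, such a cyclic sequence with no other local minimum would rise and then
fall, so by summation by parts `∑ (sₖ₊₁ - sₖ) (ζᵏ⁺¹ - 1) = 0` with coefficients that change sign
only once. A line
through `0` separates the two arcs of points `ζᵏ⁺¹ - 1`, which forces all coefficients to vanish,
and a constant sequence has many local minima. Local maxima are local minima of `-s`.
-/

open Complex Finset Real ComplexConjugate

theorem sum_range_sub_mul_pow_sub_one {R : Type*} [CommRing R] (r : ℕ → R) (ζ : R) (N : ℕ) :
    ∑ k ∈ range N, (r (k + 1) - r k) * (ζ ^ (k + 1) - 1)
      = (1 - ζ) * ∑ k ∈ range N, r k * ζ ^ k + r N * (ζ ^ N - 1) := by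
  induction N with
  | zero => simp
  | succ N ih => rw [sum_range_succ, ih, sum_range_succ]; ring

theorem re_exp_neg_mul_exp_sub_one (x φ : ℝ) :
    (cexp (-(φ * I)) * (cexp ((2 * x : ℝ) * I) - 1)).re
      = -2 * Real.sin x * Real.sin (x - φ) := by
  have hexp : cexp (-(φ * I)) * cexp ((2 * x : ℝ) * I) = cexp ((2 * x - φ : ℝ) * I) := by
    rw [← Complex.exp_add]; push_cast; ring_nf
  rw [mul_sub, hexp, mul_one, show -(φ * I) = (-φ : ℝ) * I by push_cast; ring, sub_re,
    exp_ofReal_mul_I_re, exp_ofReal_mul_I_re, Real.cos_neg, Real.cos_sub_cos]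
  ring_nf

theorem re_exp_neg_mul_exp_pow_sub_one {n : ℕ} (hn : n ≠ 0) (m j : ℕ) :
    (cexp (-((π * (2 * m + 1) / (2 * n) : ℝ) * I)) * (cexp (2 * π * I / n) ^ j - 1)).re
      = -2 * (Real.sin (π * (j / n)) * Real.sin (π * ((2 * j - 2 * m - 1) / (2 * n)))) := by
  have hn' : (n : ℝ) ≠ 0 := by exact_mod_cast hn
  rw [← Complex.exp_nat_mul,
    show (j : ℂ) * (2 * π * I / n) = ((2 * (π * (j / n)) : ℝ) : ℂ) * I by push_cast; field_simp,
    re_exp_neg_mul_exp_sub_one, mul_assoc]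
  congr 4
  field_simp
  ring

theorem sin_pi_mul_pos {t : ℝ} (h0 : 0 < t) (h1 : t < 1) : 0 < Real.sin (π * t) :=
  Real.sin_pos_of_pos_of_lt_pi (mul_pos pi_pos h0) (by nlinarith [pi_pos])

theorem sin_pi_mul_neg {t : ℝ} (h0 : -1 < t) (h1 : t < 0) : Real.sin (π * t) < 0 := by
  have := sin_pi_mul_pos (t := -t) (by linarith) (by linarith)
  rw [mul_neg, Real.sin_neg] at this
  linarith

theorem sin_pi_mul_div_pos {n j : ℕ} (hj0 : 0 < j) (hjn : j < n) :
    0 < Real.sin (π * (j / n)) := by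
  have hn : (0 : ℝ) < n := by exact_mod_cast (show 0 < n by omega)
  exact sin_pi_mul_pos (by positivity) (by rw [div_lt_one hn]; exact_mod_cast hjn)

theorem sin_mul_sin_neg_of_le {n m j : ℕ} (hmn : m ≤ n) (hj0 : 0 < j) (hjm : j ≤ m)
    (hjn : j < n) :
    Real.sin (π * (j / n)) * Real.sin (π * ((2 * j - 2 * m - 1) / (2 * n))) < 0 := by
  have hj0' : (1 : ℝ) ≤ j := by exact_mod_cast hj0
  have hjm' : (j : ℝ) ≤ m := by exact_mod_cast hjm
  have hmn' : (m : ℝ) ≤ n := by exact_mod_cast hmn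
  have hn : (0 : ℝ) < n := by exact_mod_cast (show 0 < n by omega)
  refine mul_neg_of_pos_of_neg (sin_pi_mul_div_pos hj0 hjn) (sin_pi_mul_neg ?_ ?_)
  · rw [lt_div_iff₀ (by positivity)]; linarith
  · exact div_neg_of_neg_of_pos (by linarith) (by positivity)

theorem sin_mul_sin_pos_of_lt {n m j : ℕ} (hmj : m < j) (hjn : j < n) :
    0 < Real.sin (π * (j / n)) * Real.sin (π * ((2 * j - 2 * m - 1) / (2 * n))) := by
  have hmj' : (m : ℝ) + 1 ≤ j := by exact_mod_cast hmj
  have hjn' : (j : ℝ) < n := by exact_mod_cast hjn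
  have hn : (0 : ℝ) < n := by exact_mod_cast (show 0 < n by omega)
  refine mul_pos (sin_pi_mul_div_pos (by omega) hjn) (sin_pi_mul_pos ?_ ?_)
  · exact div_pos (by linarith) (by positivity)
  · rw [div_lt_one (by positivity)]; linarith

/-- The real part of `exp (-φ I) * z` with `φ = π (2m + 1) / (2n)` is positive at the points
`z = ζ ^ (k + 1) - 1` with `k < m` and negative at those with `m ≤ k < n - 1`. -/
theorem eq_zero_of_sum_mul_exp_pow_sub_one_eq_zero {n m : ℕ} (hmn : m ≤ n) {c : ℕ → ℝ}
    (hc_nonneg : ∀ k < m, 0 ≤ c k) (hc_nonpos : ∀ k, m ≤ k → k + 1 < n → c k ≤ 0)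
    (h : ∑ k ∈ range n, (c k : ℂ) * (cexp (2 * π * I / n) ^ (k + 1) - 1) = 0)
    {k : ℕ} (hk : k + 1 < n) : c k = 0 := by
  set f : ℕ → ℝ := fun j =>
    Real.sin (π * (j / n)) * Real.sin (π * ((2 * j - 2 * m - 1) / (2 * n)))
  have hsum : ∑ k ∈ range n, c k * f (k + 1) = 0 := by
    have := congrArg (fun z => (cexp (-((π * (2 * m + 1) / (2 * n) : ℝ) * I)) * z).re / -2) h
    simp only [mul_sum, re_sum, sum_div, zero_re, mul_zero, zero_div] at this
    rw [← this]
    refine sum_congr rfl fun k _ => ?_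
    rw [mul_left_comm _ (c k : ℂ), re_ofReal_mul, re_exp_neg_mul_exp_pow_sub_one (by omega)]
    ring
  have hterm : ∀ k ∈ range n, c k * f (k + 1) ≤ 0 := by
    intro k hk
    by_cases hkn : k + 1 < n
    · rcases lt_or_ge k m with hkm | hkm
      · exact mul_nonpos_of_nonneg_of_nonpos (hc_nonneg k hkm)
          (sin_mul_sin_neg_of_le hmn k.succ_pos hkm hkn).le
      · exact mul_nonpos_of_nonpos_of_nonneg (hc_nonpos k hkm hkn)
          (sin_mul_sin_pos_of_lt (by omega) hkn).le
    · have hkn : ((k : ℝ) + 1) / n = 1 := by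
        have hkn : k + 1 = n := by simp only [mem_range] at hk; omega
        rw [div_eq_one_iff_eq (by norm_cast; omega)]
        exact_mod_cast hkn
      simp [f, hkn]
  have hzero := (sum_eq_zero_iff_of_nonpos hterm).1 hsum k (mem_range.2 (by omega))
  rcases lt_or_ge k m with hkm | hkm
  · exact (mul_eq_zero.1 hzero).resolve_right (sin_mul_sin_neg_of_le hmn k.succ_pos hkm hk).ne
  · exact (mul_eq_zero.1 hzero).resolve_right (sin_mul_sin_pos_of_lt (by omega) hk).ne'

theorem exists_unimodal_of_forall_not_local_min {n : ℕ} (r : ℕ → ℝ)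
    (h : ∀ k, 0 < k → k < n → r k ≤ r (k - 1) → r (k + 1) < r k) :
    ∃ m ≤ n, (∀ k < m, r k ≤ r (k + 1)) ∧ ∀ k, m ≤ k → k + 1 < n → r (k + 1) ≤ r k := by
  classical
  have hex : ∃ m, n ≤ m ∨ r (m + 1) < r m := ⟨n, Or.inl le_rfl⟩
  refine ⟨Nat.find hex, Nat.find_min' hex (Or.inl le_rfl), fun k hk => ?_, fun k hmk hkn => ?_⟩
  · exact not_lt.1 fun h' => Nat.find_min hex hk (Or.inr h')
  · suffices r (k + 1) < r k from this.le
    induction k, hmk using Nat.le_induction with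
    | base => exact (Nat.find_spec hex).resolve_left (by omega)
    | succ k hmk ih => exact h (k + 1) (by omega) (by omega) (ih (by omega)).le

theorem exists_local_min_of_sum_mul_exp_pow_eq_zero {n : ℕ} (hn : 3 ≤ n) (r : ℕ → ℝ)
    (h : ∑ k ∈ range n, (r k : ℂ) * cexp (2 * π * I / n) ^ k = 0) :
    ∃ k, 0 < k ∧ k < n ∧ r k ≤ r (k - 1) ∧ r k ≤ r (k + 1) := by
  by_contra! hno
  obtain ⟨m, hmn, hinc, hdec⟩ := exists_unimodal_of_forall_not_local_min r hno
  have hζ : cexp (2 * π * I / n) ^ n = 1 := (isPrimitiveRoot_exp n (by omega)).pow_eq_one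
  have habel : ∑ k ∈ range n,
      ((r (k + 1) - r k : ℝ) : ℂ) * (cexp (2 * π * I / n) ^ (k + 1) - 1) = 0 := by
    push_cast
    rw [sum_range_sub_mul_pow_sub_one (fun k => (r k : ℂ)), h, hζ]
    simp
  have hconst : ∀ k, k + 1 < n → r (k + 1) = r k := fun k hk =>
    sub_eq_zero.1 <| eq_zero_of_sum_mul_exp_pow_sub_one_eq_zero hmn
      (fun k hk => sub_nonneg.2 (hinc k hk)) (fun k h₁ h₂ => sub_nonpos.2 (hdec k h₁ h₂))
      habel hk
  have h21 := hno 1 one_pos (by omega) (hconst 0 (by omega)).le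
  linarith [hconst 1 (by omega)]

theorem exists_ne_local_min_of_sum_mul_exp_pow_eq_zero {n : ℕ} (hn : 3 ≤ n) (s : ZMod n → ℝ)
    (i : ZMod n) (h : ∑ k ∈ range n, (s (i + k) : ℂ) * cexp (2 * π * I / n) ^ k = 0) :
    ∃ j ≠ i, s j ≤ s (j - 1) ∧ s j ≤ s (j + 1) := by
  obtain ⟨k, hk0, hkn, hprev, hnext⟩ :=
    exists_local_min_of_sum_mul_exp_pow_eq_zero hn (fun k => s (i + k)) h
  refine ⟨i + k, ?_, ?_, ?_⟩
  · rw [Ne, add_eq_left, ZMod.natCast_eq_zero_iff]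
    exact Nat.not_dvd_of_pos_of_lt hk0 hkn
  · simpa [Nat.cast_sub (by omega : 1 ≤ k), add_sub_assoc] using hprev
  · simpa [add_assoc] using hnext

theorem exists_two_local_min_of_sum_mul_exp_pow_eq_zero {n : ℕ} [NeZero n] (hn : 3 ≤ n)
    (s : ZMod n → ℝ) (h : ∀ i, ∑ k ∈ range n, (s (i + k) : ℂ) * cexp (2 * π * I / n) ^ k = 0) :
    ∃ i j, i ≠ j ∧ (s i ≤ s (i - 1) ∧ s i ≤ s (i + 1)) ∧
      (s j ≤ s (j - 1) ∧ s j ≤ s (j + 1)) := by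
  obtain ⟨i, -, hi⟩ := exists_min_image univ s univ_nonempty
  obtain ⟨j, hji, hj⟩ := exists_ne_local_min_of_sum_mul_exp_pow_eq_zero hn s i (h i)
  exact ⟨i, j, hji.symm, ⟨hi _ (mem_univ _), hi _ (mem_univ _)⟩, hj⟩

theorem sin_half_mul_sum_range_sin (α : ℝ) (j : ℕ) :
    Real.sin (α / 2) * ∑ k ∈ range j, Real.sin (k * α)
      = Real.sin (j * α / 2) * Real.sin ((j - 1) * α / 2) := by
  induction j with
  | zero => simp
  | succ j ih =>
    rw [sum_range_succ, mul_add, ih]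
    have e₁ : ((j + 1 : ℕ) : ℝ) * α / 2 = j * α / 2 + α / 2 := by push_cast; ring
    have e₂ : (((j + 1 : ℕ) : ℝ) - 1) * α / 2 = j * α / 2 := by push_cast; ring
    have e₃ : ((j : ℝ) - 1) * α / 2 = j * α / 2 - α / 2 := by ring
    have e₄ : Real.sin (j * α) = Real.sin (2 * (j * α / 2)) := by ring_nf
    rw [e₁, e₂, e₃, e₄, Real.sin_add, Real.sin_sub, Real.sin_two_mul]
    ring

/-- With `j = n / m + 1`, the angle `j * (2πm/n) / 2` lies in `[π, 2π]` while
`(j - 1) * (2πm/n) / 2` lies in `[0, π]`. -/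
theorem sum_range_sin_nonpos {n m : ℕ} (hm : 0 < m) (hmn : m < n) :
    ∑ k ∈ range (n / m + 1), Real.sin (k * (2 * π * m / n)) ≤ 0 := by
  have hn : (0 : ℝ) < n := by exact_mod_cast (show 0 < n by omega)
  have hq : ((m * (n / m) : ℕ) : ℝ) ≤ n := by exact_mod_cast Nat.mul_div_le n m
  have hq' : (n : ℝ) < ((m * (n / m + 1) : ℕ) : ℝ) := by
    exact_mod_cast Nat.lt_mul_div_succ n hm
  have hmn' : (m : ℝ) < n := by exact_mod_cast hmn
  push_cast at hq hq'
  have hhalf : 0 < Real.sin (2 * π * m / n / 2) := by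
    rw [show 2 * π * m / n / 2 = π * (m / n) by ring]
    exact sin_pi_mul_pos (by positivity) (by rw [div_lt_one hn]; exact hmn')
  have hfirst : 0 ≤ Real.sin ((((n / m + 1 : ℕ) : ℝ) - 1) * (2 * π * m / n) / 2) := by
    push_cast
    rw [show ((n / m : ℕ) + 1 - 1 : ℝ) * (2 * π * m / n) / 2 = π * (m * (n / m : ℕ) / n) by
      ring]
    refine Real.sin_nonneg_of_nonneg_of_le_pi (by positivity) ?_
    have : (m * (n / m : ℕ) : ℝ) / n ≤ 1 := by rw [div_le_one hn]; exact hq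
    nlinarith [pi_pos]
  have hsecond : Real.sin (((n / m + 1 : ℕ) : ℝ) * (2 * π * m / n) / 2) ≤ 0 := by
    rw [show ((n / m + 1 : ℕ) : ℝ) * (2 * π * m / n) / 2
        = π * (m * (n / m + 1 : ℕ) / n - 1) + π by ring, Real.sin_add_pi]
    push_cast
    refine neg_nonpos.2 (Real.sin_nonneg_of_nonneg_of_le_pi ?_ ?_)
    · have : 1 ≤ (m * ((n / m : ℕ) + 1) : ℝ) / n := by rw [le_div_iff₀ hn]; linarith
      nlinarith [pi_pos]
    · have : (m * ((n / m : ℕ) + 1) : ℝ) / n ≤ 2 := by rw [div_le_iff₀ hn]; linarith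
      nlinarith [pi_pos]
  have := sin_half_mul_sum_range_sin (2 * π * m / n) (n / m + 1)
  nlinarith [mul_nonpos_of_nonpos_of_nonneg hsecond hfirst]

/-- Write `α = 2πm/n`; if `m ≥ 2`, the partial sum up to `n / m + 1` is nonpositive. -/
theorem eq_two_pi_div_of_sum_range_sin_pos {n : ℕ} (hn : 0 < n) {α : ℝ} (hα : α ∈ Set.Ioo 0 π)
    (hαn : cexp (α * I) ^ n = 1)
    (h : ∀ j, 2 ≤ j → j < n → 0 < ∑ k ∈ range j, Real.sin (k * α)) :
    α = 2 * π / n := by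
  have hn' : (0 : ℝ) < n := by exact_mod_cast hn
  rw [← Complex.exp_nat_mul, Complex.exp_eq_one_iff] at hαn
  obtain ⟨z, hz⟩ := hαn
  have hnα : n * α = 2 * π * z := by
    have := congrArg Complex.im hz
    simp only [mul_im, natCast_re, natCast_im, ofReal_re, ofReal_im, I_re, I_im, intCast_re,
      intCast_im, mul_re, re_ofNat, im_ofNat] at this
    linarith
  have hz0 : (0 : ℝ) < z := by nlinarith [hα.1, pi_pos]
  have hzn : 2 * (z : ℝ) < n := by nlinarith [hα.2, pi_pos]
  lift z to ℕ using (by exact_mod_cast hz0.le)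
  push_cast at hz0 hzn hnα
  have hz0' : 0 < z := by exact_mod_cast hz0
  have hzn' : 2 * z < n := by exact_mod_cast hzn
  have hαz : α = 2 * π * z / n := by field_simp; linarith
  obtain rfl : z = 1 := by
    by_contra hz1
    have hj₁ : 0 < n / z := Nat.div_pos (by omega) hz0'
    have hj₂ : n / z ≤ n / 2 := Nat.div_le_div_left (by omega) (by omega)
    have := h (n / z + 1) (by omega) (by omega)
    rw [hαz] at this
    exact this.not_ge (sum_range_sin_nonpos hz0' (by omega))
  simpa using hαz

theorem sum_range_pos_of_forall_sum_range_mul_pos {n : ℕ} [NeZero n] {s : ZMod n → ℝ}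
    (hs : ∀ i, 0 < s i) {c : ℕ → ℝ} {j : ℕ} (h : ∀ i, 0 < ∑ k ∈ range j, s (i + k) * c k) :
    0 < ∑ k ∈ range j, c k := by
  have hpos : 0 < ∑ i, ∑ k ∈ range j, s (i + k) * c k :=
    sum_pos (fun i _ => h i) univ_nonempty
  have hshift : ∀ k : ℕ, ∑ i, s (i + k) = ∑ i, s i := fun k =>
    Equiv.sum_comp (Equiv.addRight (k : ZMod n)) s
  rw [sum_comm] at hpos
  simp only [← sum_mul, hshift, ← mul_sum] at hpos
  exact pos_of_mul_pos_right hpos (sum_nonneg fun i _ => (hs i).le)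

theorem im_sum_ofReal_mul_exp_pow (a : ℕ → ℝ) (α : ℝ) (j : ℕ) :
    (∑ k ∈ range j, (a k : ℂ) * cexp (α * I) ^ k).im
      = ∑ k ∈ range j, a k * Real.sin (k * α) := by
  simp only [im_sum, im_ofReal_mul, ← Complex.exp_nat_mul, ← mul_assoc]
  exact sum_congr rfl fun k _ => by rw [← ofReal_natCast, ← ofReal_mul, exp_ofReal_mul_I_im]

theorem Complex.angle_neg_eq_pi_sub_arg_div {u v : ℂ} (hu : u ≠ 0) (hv : v ≠ 0)
    (h : 0 ≤ (v / u).im) : InnerProductGeometry.angle (-u) v = π - arg (v / u) := by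
  rw [InnerProductGeometry.angle_neg_left, InnerProductGeometry.angle_comm,
    Complex.angle_eq_abs_arg hv hu, abs_of_nonneg (arg_nonneg_iff.2 h)]

theorem mul_norm_eq_norm_mul_pow_mul {n : ℕ} {e : ZMod n → ℂ} (he : ∀ i, e i ≠ 0) {ζ : ℂ}
    (h : ∀ i, e (i + 1) * ‖e i‖ = ‖e (i + 1)‖ * ζ * e i) (i : ZMod n) (k : ℕ) :
    e (i + k) * ‖e i‖ = ‖e (i + k)‖ * ζ ^ k * e i := by
  induction k with
  | zero => simp [mul_comm]
  | succ k ih =>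
    have hk : (‖e (i + k)‖ : ℂ) ≠ 0 := by simpa using he (i + k)
    refine mul_right_cancel₀ hk ?_
    rw [Nat.cast_succ, ← add_assoc]
    linear_combination ‖e i‖ * h (i + k) + ‖e (i + k + 1)‖ * ζ * ih

theorem planeDet_eq_im_conj_mul (u v : ℂ) : planeDet u v = (conj u * v).im := by
  simp only [planeDet, mul_im, conj_re, conj_im]
  ring

def sideVector {n : ℕ} (V : ZMod n → ℂ) (i : ZMod n) : ℂ := V (i + 1) - V i

def IsEquiangular {n : ℕ} (V : ZMod n → ℂ) : Prop :=
  ∀ i j : ZMod n, EuclideanGeometry.angle (V (i - 1)) (V i) (V (i + 1)) =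
    EuclideanGeometry.angle (V (j - 1)) (V j) (V (j + 1))

/-- Each side is the previous one turned by `α` and rescaled to its own length. -/
def HasExteriorAngle {n : ℕ} (V : ZMod n → ℂ) (α : ℝ) : Prop :=
  ∀ i, sideVector V (i + 1) * ‖sideVector V i‖
    = ‖sideVector V (i + 1)‖ * cexp (α * I) * sideVector V i

theorem sum_range_sideVector {n : ℕ} (V : ZMod n → ℂ) (i : ZMod n) (j : ℕ) :
    ∑ k ∈ range j, sideVector V (i + k) = V (i + j) - V i := by
  induction j with
  | zero => simp
  | succ j ih => rw [sum_range_succ, ih, sideVector]; push_cast; ring_nf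

namespace IsConvexPolygon

variable {n : ℕ} {V : ZMod n → ℂ}

theorem im_conj_sideVector_mul_pos (hV : IsConvexPolygon V) (i : ZMod n) {j : ℕ} (hj : 2 ≤ j)
    (hjn : j < n) : 0 < (conj (sideVector V i) * (V (i + j) - V i)).im := by
  rw [sideVector, ← planeDet_eq_im_conj_mul]
  refine hV i (i + j) ?_ ?_
  · rw [Ne, add_eq_left, ZMod.natCast_eq_zero_iff]
    exact Nat.not_dvd_of_pos_of_lt (by omega) hjn
  · rw [Ne, add_right_inj, ← Nat.cast_one, ZMod.natCast_eq_natCast_iff', Nat.mod_eq_of_lt hjn,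
      Nat.mod_eq_of_lt (by omega)]
    omega

theorem im_conj_sideVector_mul_sideVector_succ_pos (hV : IsConvexPolygon V) (hn : 3 ≤ n)
    (i : ZMod n) : 0 < (conj (sideVector V i) * sideVector V (i + 1)).im := by
  have h := hV.im_conj_sideVector_mul_pos i (j := 2) le_rfl (by omega)
  rw [← sum_range_sideVector, sum_range_succ, sum_range_one, Nat.cast_zero, add_zero,
    Nat.cast_one, mul_add, conj_mul', add_im, ← ofReal_pow, ofReal_im, zero_add] at h
  exact h

theorem sideVector_ne_zero (hV : IsConvexPolygon V) (hn : 3 ≤ n) (i : ZMod n) :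
    sideVector V i ≠ 0 := fun h0 => by
  simpa [h0] using hV.im_conj_sideVector_mul_sideVector_succ_pos hn i

theorem im_sideVector_succ_div_pos (hV : IsConvexPolygon V) (hn : 3 ≤ n) (i : ZMod n) :
    0 < (sideVector V (i + 1) / sideVector V i).im := by
  have h := hV.im_conj_sideVector_mul_sideVector_succ_pos hn i
  have hne := normSq_pos.2 (hV.sideVector_ne_zero hn i)
  simp only [mul_im, conj_re, conj_im] at h
  rw [div_im, ← sub_div]
  exact div_pos (by linarith) hne

theorem angle_eq_pi_sub_arg (hV : IsConvexPolygon V) (hn : 3 ≤ n) (i : ZMod n) :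
    EuclideanGeometry.angle (V (i + 1 - 1)) (V (i + 1)) (V (i + 1 + 1))
      = π - arg (sideVector V (i + 1) / sideVector V i) := by
  rw [add_sub_cancel_right, EuclideanGeometry.angle, vsub_eq_sub, vsub_eq_sub,
    show V i - V (i + 1) = -sideVector V i by rw [sideVector]; ring]
  exact Complex.angle_neg_eq_pi_sub_arg_div (hV.sideVector_ne_zero hn i)
    (hV.sideVector_ne_zero hn (i + 1)) (hV.im_sideVector_succ_div_pos hn i).le

theorem exists_hasExteriorAngle (hV : IsConvexPolygon V) (hn : 3 ≤ n)
    (hequi : IsEquiangular V) : ∃ α ∈ Set.Ioo 0 π, HasExteriorAngle V α := by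
  set α := arg (sideVector V (0 + 1) / sideVector V 0)
  have harg : ∀ i, arg (sideVector V (i + 1) / sideVector V i) = α := fun i => by
    have := hequi (i + 1) (0 + 1)
    rw [hV.angle_eq_pi_sub_arg hn, hV.angle_eq_pi_sub_arg hn] at this
    exact sub_right_inj.1 this
  have hpos := hV.im_sideVector_succ_div_pos hn 0
  refine ⟨α, ⟨?_, ?_⟩, fun i => ?_⟩
  · exact (arg_nonneg_iff.2 hpos.le).lt_of_ne fun h => hpos.ne' (arg_eq_zero_iff.1 h.symm).2
  · exact arg_lt_pi_iff.2 (Or.inr hpos.ne')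
  · have hne := hV.sideVector_ne_zero hn i
    have hw := norm_mul_exp_arg_mul_I (sideVector V (i + 1) / sideVector V i)
    rw [harg, norm_div, eq_div_iff hne] at hw
    conv_lhs => rw [← hw]
    have : (‖sideVector V i‖ : ℂ) ≠ 0 := by simpa using hne
    push_cast
    field_simp

end IsConvexPolygon

namespace HasExteriorAngle

variable {n : ℕ} {V : ZMod n → ℂ} {α : ℝ}

theorem sub_mul_norm_eq_sum_mul (h : HasExteriorAngle V α) (hne : ∀ i, sideVector V i ≠ 0)
    (i : ZMod n) (j : ℕ) :
    (V (i + j) - V i) * ‖sideVector V i‖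
      = (∑ k ∈ range j, (‖sideVector V (i + k)‖ : ℂ) * cexp (α * I) ^ k) * sideVector V i := by
  rw [← sum_range_sideVector, sum_mul, sum_mul]
  exact sum_congr rfl fun k _ => mul_norm_eq_norm_mul_pow_mul hne h i k

theorem exp_pow_eq_one [NeZero n] (h : HasExteriorAngle V α) (hne : ∀ i, sideVector V i ≠ 0) :
    cexp (α * I) ^ n = 1 := by
  have hn := mul_norm_eq_norm_mul_pow_mul hne h 0 n
  rw [ZMod.natCast_self, add_zero] at hn
  have h0 : (‖sideVector V 0‖ : ℂ) * sideVector V 0 ≠ 0 :=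
    mul_ne_zero (by simpa using hne 0) (hne 0)
  exact (mul_left_cancel₀ h0 (by linear_combination hn)).symm

theorem sum_norm_sideVector_mul_exp_pow_eq_zero [NeZero n] (h : HasExteriorAngle V α)
    (hne : ∀ i, sideVector V i ≠ 0) (i : ZMod n) :
    ∑ k ∈ range n, (‖sideVector V (i + k)‖ : ℂ) * cexp (α * I) ^ k = 0 := by
  have hn := h.sub_mul_norm_eq_sum_mul hne i n
  rw [ZMod.natCast_self, add_zero, sub_self, zero_mul, eq_comm, mul_eq_zero] at hn
  exact hn.resolve_right (hne i)

theorem sum_norm_sideVector_mul_sin_pos (h : HasExteriorAngle V α) (hV : IsConvexPolygon V)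
    (hn : 3 ≤ n) (i : ZMod n) {j : ℕ} (hj : 2 ≤ j) (hjn : j < n) :
    0 < ∑ k ∈ range j, ‖sideVector V (i + k)‖ * Real.sin (k * α) := by
  set S := ∑ k ∈ range j, (‖sideVector V (i + k)‖ : ℂ) * cexp (α * I) ^ k
  have hsum := h.sub_mul_norm_eq_sum_mul (hV.sideVector_ne_zero hn) i j
  have key : ((‖sideVector V i‖ : ℝ) : ℂ) * (conj (sideVector V i) * (V (i + j) - V i))
      = ((‖sideVector V i‖ ^ 2 : ℝ) : ℂ) * S := by
    push_cast
    linear_combination conj (sideVector V i) * hsum + S * conj_mul' (sideVector V i)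
  have him := congrArg Complex.im key
  rw [im_ofReal_mul, im_ofReal_mul, im_sum_ofReal_mul_exp_pow] at him
  have hpos := mul_pos (norm_pos_iff.2 (hV.sideVector_ne_zero hn i))
    (hV.im_conj_sideVector_mul_pos i hj hjn)
  exact pos_of_mul_pos_right (him ▸ hpos) (sq_nonneg _)

end HasExteriorAngle

theorem IsConvexPolygon.sum_norm_sideVector_mul_exp_pow_eq_zero {n : ℕ} [NeZero n]
    {V : ZMod n → ℂ} (hV : IsConvexPolygon V) (hn : 3 ≤ n) (hequi : IsEquiangular V)
    (i : ZMod n) :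
    ∑ k ∈ range n, (‖sideVector V (i + k)‖ : ℂ) * cexp (2 * π * I / n) ^ k = 0 := by
  obtain ⟨α, hα, hext⟩ := hV.exists_hasExteriorAngle hn hequi
  have hne := hV.sideVector_ne_zero hn
  have hα' : α = 2 * π / n :=
    eq_two_pi_div_of_sum_range_sin_pos (by omega) hα (hext.exp_pow_eq_one hne)
      fun j hj hjn => sum_range_pos_of_forall_sum_range_mul_pos
        (fun i => norm_pos_iff.2 (hne i))
        fun i => hext.sum_norm_sideVector_mul_sin_pos hV hn i hj hjn
  rw [show 2 * π * I / n = (2 * π / n : ℝ) * I by push_cast; ring, ← hα']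
  exact hext.sum_norm_sideVector_mul_exp_pow_eq_zero hne i

/-- In an equiangular convex polygon with `n ≥ 4` vertices, the cyclic
sequence of side lengths has at least two local minima and at least two local maxima. -/
theorem equiangular_convex_polygon_four_side_extrema (n : ℕ) [NeZero n] (hn : 4 ≤ n)
    (V : ZMod n → ℂ) (hconv : IsConvexPolygon V)
    (hequiang : ∀ i j : ZMod n,
      EuclideanGeometry.angle (V (i - 1)) (V i) (V (i + 1)) =
      EuclideanGeometry.angle (V (j - 1)) (V j) (V (j + 1))) :
    (∃ i j : ZMod n, i ≠ j ∧
      (dist (V i) (V (i + 1)) ≤ dist (V (i - 1)) (V i) ∧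
       dist (V i) (V (i + 1)) ≤ dist (V (i + 1)) (V (i + 2))) ∧
      (dist (V j) (V (j + 1)) ≤ dist (V (j - 1)) (V j) ∧
       dist (V j) (V (j + 1)) ≤ dist (V (j + 1)) (V (j + 2)))) ∧
    (∃ i j : ZMod n, i ≠ j ∧
      (dist (V (i - 1)) (V i) ≤ dist (V i) (V (i + 1)) ∧
       dist (V (i + 1)) (V (i + 2)) ≤ dist (V i) (V (i + 1))) ∧
      (dist (V (j - 1)) (V j) ≤ dist (V j) (V (j + 1)) ∧
       dist (V (j + 1)) (V (j + 2)) ≤ dist (V j) (V (j + 1)))) := by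
  have hn3 : 3 ≤ n := by omega
  set s : ZMod n → ℝ := fun i => ‖sideVector V i‖
  have hdist : ∀ i, dist (V i) (V (i + 1)) = s i := fun i => by
    rw [dist_comm, Complex.dist_eq]; rfl
  have hprev : ∀ i, dist (V (i - 1)) (V i) = s (i - 1) := fun i => by
    rw [← hdist, sub_add_cancel]
  have hnext : ∀ i, dist (V (i + 1)) (V (i + 2)) = s (i + 1) := fun i => by
    rw [← hdist, add_assoc, one_add_one_eq_two]
  have hsum := hconv.sum_norm_sideVector_mul_exp_pow_eq_zero hn3 hequiang
  simp only [hdist, hprev, hnext]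
  refine ⟨exists_two_local_min_of_sum_mul_exp_pow_eq_zero hn3 s hsum, ?_⟩
  obtain ⟨i, j, hij, hi, hj⟩ := exists_two_local_min_of_sum_mul_exp_pow_eq_zero hn3 (-s)
    fun i => by simpa [sum_neg_distrib] using congrArg Neg.neg (hsum i)
  simp only [Pi.neg_apply, neg_le_neg_iff] at hi hj
  exact ⟨i, j, hij, hi, hj⟩
end

section
/- Let M be an equilateral convex polygon with vertices V₁,…,Vₙ (n > 3), no four vertices concyclic. Then any two neighboring vertices of M lie on a circle empty of other vertices of M, and consequently at least four of the circles Cᵢ through consecutive triples of vertices are extremal (empty or full). -/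
def NoFourConcyclic {n : ℕ} [NeZero n] (V : ZMod n → ℂ) : Prop :=
  ∀ (O : ℂ) (r : ℝ), Set.ncard {i : ZMod n | dist O (V i) = r} ≤ 3

/-- The circle through `V (i-1), V i, V (i+1)` is empty: all other vertices strictly
outside. -/
def EmptyNbrCircle {n : ℕ} (V : ZMod n → ℂ) (i : ZMod n) : Prop :=
  ∃ (O : ℂ) (r : ℝ), dist O (V (i - 1)) = r ∧ dist O (V i) = r ∧ dist O (V (i + 1)) = r ∧
    ∀ j : ZMod n, j ≠ i - 1 → j ≠ i → j ≠ i + 1 → r < dist O (V j)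

/-- The circle through `V (i-1), V i, V (i+1)` is full: all other vertices strictly inside. -/
def FullNbrCircle {n : ℕ} (V : ZMod n → ℂ) (i : ZMod n) : Prop :=
  ∃ (O : ℂ) (r : ℝ), dist O (V (i - 1)) = r ∧ dist O (V i) = r ∧ dist O (V (i + 1)) = r ∧
    ∀ j : ZMod n, j ≠ i - 1 → j ≠ i → j ≠ i + 1 → dist O (V j) < r

open Complex Filter Topology

lemma planeDet_swap (u v : ℂ) : planeDet u v = -planeDet v u := by
  simp only [planeDet]; ring

lemma planeDet_sub_sub_rotate_s18 (a b c : ℂ) :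
    planeDet (c - b) (a - b) = planeDet (b - a) (c - a) := by
  simp only [planeDet, sub_re, sub_im]; ring

lemma ne_of_planeDet_sub_sub_pos {a b c : ℂ} (h : 0 < planeDet (b - a) (c - a)) :
    b ≠ a ∧ c ≠ a ∧ c ≠ b := by
  refine ⟨?_, ?_, ?_⟩ <;> rintro rfl <;> simp [planeDet, mul_comm] at h

lemma planeDet_pos_trans_s18 {f u v w : ℂ} (hfu : 0 ≤ planeDet f u) (hfv : 0 < planeDet f v)
    (hfw : 0 < planeDet f w) (huv : 0 < planeDet u v) (hvw : 0 < planeDet v w) :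
    0 < planeDet u w := by
  have key : planeDet u w * planeDet f v =
      planeDet u v * planeDet f w + planeDet v w * planeDet f u := by
    simp only [planeDet]; ring
  refine pos_of_mul_pos_left ?_ hfv.le
  rw [key]
  positivity

/-- The centres of the circles through `a` and `b`, parametrised along the perpendicular
bisector of `ab`. -/
noncomputable def pencilCenter (a b : ℂ) (u : ℝ) : ℂ :=
  ((1 / 2 : ℝ) : ℂ) * (a + b) + u * I * (b - a)

/-- The power of `z` with respect to the circle of the pencil through `a`, `b` with
parameter `u`. -/
noncomputable def pencilPower (a b z : ℂ) (u : ℝ) : ℝ :=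
  normSq (z - pencilCenter a b u) - normSq (a - pencilCenter a b u)

/-- The parameter of the circle of the pencil through `a`, `b` that passes through `z`
(junk when `z` is on the line `ab`). -/
noncomputable def pencilRoot (a b z : ℂ) : ℝ :=
  pencilPower a b z 0 / (2 * planeDet (b - a) (z - a))

lemma pencilPower_eq (a b z : ℂ) (u : ℝ) :
    pencilPower a b z u = pencilPower a b z 0 - 2 * u * planeDet (b - a) (z - a) := by
  simp only [pencilPower, pencilCenter, planeDet, normSq_apply, add_re, add_im, sub_re, sub_im,
    mul_re, mul_im, I_re, I_im, ofReal_re, ofReal_im]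
  ring

lemma pencilPower_eq_mul_pencilRoot_sub {a b z : ℂ} (hz : planeDet (b - a) (z - a) ≠ 0)
    (u : ℝ) :
    pencilPower a b z u = 2 * planeDet (b - a) (z - a) * (pencilRoot a b z - u) := by
  rw [pencilPower_eq, pencilRoot, mul_sub, mul_div_cancel₀ _ (mul_ne_zero two_ne_zero hz)]
  ring

lemma continuous_pencilPower (a b z : ℂ) : Continuous (pencilPower a b z) := by
  have : pencilPower a b z = fun u => pencilPower a b z 0 - 2 * u * planeDet (b - a) (z - a) :=
    funext (pencilPower_eq a b z)
  rw [this]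
  fun_prop

lemma pencilPower_eq_dist_sq (a b z : ℂ) (u : ℝ) :
    pencilPower a b z u = dist (pencilCenter a b u) z ^ 2 - dist (pencilCenter a b u) a ^ 2 := by
  simp only [pencilPower, dist_comm (pencilCenter a b u), dist_eq, Complex.sq_norm]

lemma pencilPower_eq_zero_iff {a b z : ℂ} {u : ℝ} :
    pencilPower a b z u = 0 ↔ dist (pencilCenter a b u) z = dist (pencilCenter a b u) a := by
  rw [pencilPower_eq_dist_sq, sub_eq_zero, sq_eq_sq₀ dist_nonneg dist_nonneg]

lemma dist_pencilCenter_right (a b : ℂ) (u : ℝ) :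
    dist (pencilCenter a b u) b = dist (pencilCenter a b u) a := by
  rw [← pencilPower_eq_zero_iff]
  simp only [pencilPower, pencilCenter, normSq_apply, add_re, add_im, sub_re, sub_im,
    mul_re, mul_im, I_re, I_im, ofReal_re, ofReal_im]
  ring

lemma pos_mul_sq_sub_sq_iff {s x y : ℝ} (hx : 0 ≤ x) (hy : 0 ≤ y) :
    0 < s * (x ^ 2 - y ^ 2) ↔ 0 < s * (x - y) := by
  rcases (add_nonneg hx hy).eq_or_lt with h | h
  · obtain ⟨rfl, rfl⟩ : x = 0 ∧ y = 0 := ⟨by linarith, by linarith⟩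
    simp
  · rw [show s * (x ^ 2 - y ^ 2) = s * (x - y) * (x + y) by ring, mul_pos_iff_of_pos_right h]

lemma pos_mul_pencilPower_iff {a b z : ℂ} {s u : ℝ} :
    0 < s * pencilPower a b z u ↔
      0 < s * (dist (pencilCenter a b u) z - dist (pencilCenter a b u) a) := by
  rw [pencilPower_eq_dist_sq, pos_mul_sq_sub_sq_iff dist_nonneg dist_nonneg]

lemma exists_pencilCenter_eq {a b O : ℂ} (hab : a ≠ b) (h : dist O a = dist O b) :
    ∃ u : ℝ, pencilCenter a b u = O := by
  set e := b - a
  set w := O - ((1 / 2 : ℝ) : ℂ) * (a + b)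
  have he : e.re ^ 2 + e.im ^ 2 ≠ 0 := by
    have : normSq e ≠ 0 := normSq_eq_zero.not.2 (sub_ne_zero.2 hab.symm)
    rwa [normSq_apply, ← sq, ← sq] at this
  have horth : w.re * e.re + w.im * e.im = 0 := by
    have h2 : dist O a ^ 2 = dist O b ^ 2 := by rw [h]
    simp only [dist_comm O, dist_eq, Complex.sq_norm, normSq_apply, sub_re, sub_im] at h2
    simp only [w, e, sub_re, sub_im, add_re, add_im, mul_re, mul_im, ofReal_re, ofReal_im]
    linear_combination h2 / 2
  refine ⟨(e.re * w.im - e.im * w.re) / (e.re ^ 2 + e.im ^ 2), ?_⟩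
  suffices ((e.re * w.im - e.im * w.re) / (e.re ^ 2 + e.im ^ 2) : ℝ) * I * e = w by
    rw [pencilCenter, this]; ring
  apply Complex.ext <;>
    simp only [mul_re, mul_im, I_re, I_im, ofReal_re, ofReal_im] <;> field_simp
  · linear_combination (-e.re) * horth
  · linear_combination (-e.im) * horth

section Pencil

variable {ι : Type*} [Finite ι] (P : ι → ℂ) (S : Set ι) (a b : ℂ)

lemma exists_pencilPower_pos {s : ℝ} (hs : s ≠ 0)
    (hS : ∀ j ∈ S, 0 < planeDet (b - a) (P j - a)) :
    ∃ u, ∀ j ∈ S, 0 < s * pencilPower a b (P j) u := by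
  have hfar : ∀ j ∈ S, ∀ᶠ t in atTop, 0 < s * pencilPower a b (P j) (-s * t) := by
    intro j hj
    have hslope : 0 < 2 * s ^ 2 * planeDet (b - a) (P j - a) :=
      mul_pos (mul_pos two_pos (sq_pos_of_ne_zero hs)) (hS j hj)
    have := tendsto_atTop_add_const_left atTop (s * pencilPower a b (P j) 0)
      (tendsto_id.const_mul_atTop hslope)
    filter_upwards [this.eventually_gt_atTop 0] with t ht
    rw [id_eq] at ht
    rw [pencilPower_eq]
    linear_combination ht
  obtain ⟨t, ht⟩ := ((eventually_all_finite S.toFinite).2 hfar).exists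
  exact ⟨-s * t, ht⟩

lemma exists_pencilPower_pos_of_eq_zero {z : ℂ} {s u₁ : ℝ} (hs : s ≠ 0)
    (hz : 0 < planeDet (b - a) (z - a)) (hz₀ : pencilPower a b z u₁ = 0)
    (hS : ∀ j ∈ S, 0 < s * pencilPower a b (P j) u₁) :
    ∃ u, 0 < s * pencilPower a b z u ∧ ∀ j ∈ S, 0 < s * pencilPower a b (P j) u := by
  have hnear : ∀ᶠ u in 𝓝 u₁, ∀ j ∈ S, 0 < s * pencilPower a b (P j) u :=
    (eventually_all_finite S.toFinite).2 fun j hj =>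
      ((continuous_const.mul (continuous_pencilPower a b (P j))).tendsto u₁).eventually
        (lt_mem_nhds (hS j hj))
  have hpath : Tendsto (fun δ : ℝ => u₁ - s * δ) (𝓝[>] 0) (𝓝 u₁) := by
    have : Continuous fun δ : ℝ => u₁ - s * δ := by fun_prop
    simpa using (this.tendsto 0).mono_left nhdsWithin_le_nhds
  obtain ⟨δ, hδS, hδ⟩ := ((hpath.eventually hnear).and self_mem_nhdsWithin).exists
  refine ⟨u₁ - s * δ, ?_, hδS⟩
  rw [pencilPower_eq] at hz₀ ⊢
  have : 0 < s ^ 2 * δ * planeDet (b - a) (z - a) :=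
    mul_pos (mul_pos (sq_pos_of_ne_zero hs) hδ) hz
  linear_combination 2 * this - s * hz₀

/-- Moving a separating circle of the pencil towards the right of `ab` until it first meets a
point there. -/
lemma exists_pencilPower_eq_zero_of_pos {s u₀ : ℝ}
    (hS : ∀ j ∈ S, 0 < s * pencilPower a b (P j) u₀)
    (hright : ∃ j ∈ S, planeDet (b - a) (P j - a) < 0) :
    ∃ u, ∃ j₀ ∈ S, planeDet (b - a) (P j₀ - a) < 0 ∧ pencilPower a b (P j₀) u = 0 ∧
      ∀ j ∈ S, 0 ≤ s * pencilPower a b (P j) u := by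
  obtain ⟨j₀, ⟨hj₀S, hj₀⟩, hmax⟩ := Set.exists_max_image
    {j | j ∈ S ∧ planeDet (b - a) (P j - a) < 0} (fun j => s * pencilRoot a b (P j))
    (Set.toFinite _) hright
  have hform : ∀ j u, planeDet (b - a) (P j - a) ≠ 0 → s * pencilPower a b (P j) u =
      2 * planeDet (b - a) (P j - a) * (s * pencilRoot a b (P j) - s * u) := by
    intro j u hj
    rw [pencilPower_eq_mul_pencilRoot_sub hj]
    ring
  have hbelow : s * pencilRoot a b (P j₀) < s * u₀ := by
    have := hS j₀ hj₀S
    rw [hform _ _ hj₀.ne] at this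
    nlinarith
  refine ⟨pencilRoot a b (P j₀), j₀, hj₀S, hj₀, ?_, fun j hj => ?_⟩
  · rw [pencilPower_eq_mul_pencilRoot_sub hj₀.ne, sub_self, mul_zero]
  have hpos := hS j hj
  rcases lt_trichotomy (planeDet (b - a) (P j - a)) 0 with hD | hD | hD
  · rw [hform _ _ hD.ne]
    nlinarith [hmax j ⟨hj, hD⟩]
  · rw [pencilPower_eq, hD] at hpos ⊢
    simpa using hpos.le
  · rw [hform _ _ hD.ne'] at hpos ⊢
    nlinarith

end Pencil

section Circles

variable {ι : Type*} {V : ι → ℂ} {s : ℝ}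

/-- Some circle passes through the points `V i`, `i ∈ S`, and has all other points strictly
outside it if `s = 1`, strictly inside it if `s = -1`. -/
def HasExtremalCircle (s : ℝ) (V : ι → ℂ) (S : Set ι) : Prop :=
  ∃ (O : ℂ) (r : ℝ), (∀ i ∈ S, dist O (V i) = r) ∧ ∀ j ∉ S, 0 < s * (dist O (V j) - r)

lemma hasExtremalCircle_pair_of_pencilPower {x y : ι} {u : ℝ}
    (hsep : ∀ j ∉ ({x, y} : Set ι), 0 < s * pencilPower (V x) (V y) (V j) u) :
    HasExtremalCircle s V {x, y} := by
  refine ⟨_, _, ?_, fun j hj => pos_mul_pencilPower_iff.1 (hsep j hj)⟩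
  rintro i (rfl | rfl)
  · rfl
  · exact dist_pencilCenter_right _ _ _

lemma hasExtremalCircle_pair [Finite ι] (hs : s ≠ 0) {x y : ι}
    (hleft : ∀ j ∉ ({x, y} : Set ι), 0 < planeDet (V y - V x) (V j - V x)) :
    HasExtremalCircle s V {x, y} := by
  obtain ⟨u, hu⟩ := exists_pencilPower_pos V _ (V x) (V y) hs hleft
  exact hasExtremalCircle_pair_of_pencilPower hu

lemma HasExtremalCircle.pair_of_triple [Finite ι] (hs : s ≠ 0) {x y z : ι}
    (hxyz : 0 < planeDet (V y - V x) (V z - V x)) (h : HasExtremalCircle s V {x, y, z}) :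
    HasExtremalCircle s V {x, y} := by
  obtain ⟨O, r, hon, hsep⟩ := h
  obtain ⟨hyx, -, -⟩ := ne_of_planeDet_sub_sub_pos hxyz
  obtain ⟨u₁, rfl⟩ := exists_pencilCenter_eq hyx.symm (by rw [hon x (by simp), hon y (by simp)])
  obtain rfl := hon x (by simp)
  obtain ⟨u, hz, hu⟩ := exists_pencilPower_pos_of_eq_zero V {x, y, z}ᶜ (V x) (V y) hs hxyz
    (pencilPower_eq_zero_iff.2 (hon z (by simp)))
    (fun j hj => pos_mul_pencilPower_iff.2 (hsep j hj))
  refine hasExtremalCircle_pair_of_pencilPower (u := u) fun j hj => ?_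
  by_cases hjz : j = z
  · exact hjz ▸ hz
  · exact hu j (by simp_all)

/-- Two circles through three distinct points coincide, so they cannot have a fourth point
on opposite sides. -/
lemma HasExtremalCircle.not_neg_one {S : Set ι} {a b c j : ι} (ha : a ∈ S) (hb : b ∈ S)
    (hc : c ∈ S) (hab : V a ≠ V b) (hac : V a ≠ V c) (hbc : V b ≠ V c) (hj : j ∉ S)
    (h : HasExtremalCircle 1 V S) : ¬ HasExtremalCircle (-1) V S := by
  obtain ⟨O₁, r₁, hon₁, hsep₁⟩ := h
  rintro ⟨O₂, r₂, hon₂, hsep₂⟩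
  have hmem : ∀ {O r}, (∀ i ∈ S, dist O (V i) = r) → ∀ i ∈ S,
      V i ∈ (⟨O, r⟩ : EuclideanGeometry.Sphere ℂ) :=
    fun hon i hi => EuclideanGeometry.mem_sphere.2 ((dist_comm _ _).trans (hon i hi))
  have hO : (⟨O₁, r₁⟩ : EuclideanGeometry.Sphere ℂ) = ⟨O₂, r₂⟩ := by
    by_contra hne
    rcases EuclideanGeometry.eq_of_mem_sphere_of_mem_sphere_of_finrank_eq_two
      Complex.finrank_real_complex hne hab (hmem hon₁ a ha) (hmem hon₁ b hb) (hmem hon₁ c hc)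
      (hmem hon₂ a ha) (hmem hon₂ b hb) (hmem hon₂ c hc) with h | h
    exacts [hac h.symm, hbc h.symm]
  obtain ⟨rfl, rfl⟩ := EuclideanGeometry.Sphere.mk.inj hO
  linarith [hsep₁ j hj, hsep₂ j hj]

end Circles

namespace ZMod

variable {n : ℕ}

lemma natCast_ne_zero_of_lt {k : ℕ} (h0 : 0 < k) (hk : k < n) : (k : ZMod n) ≠ 0 := by
  rw [Ne, natCast_eq_zero_iff]
  exact Nat.not_dvd_of_pos_of_lt h0 hk

lemma add_natCast_ne_self (p : ZMod n) {k : ℕ} (h0 : 0 < k) (hk : k < n) : p + k ≠ p :=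
  fun h => natCast_ne_zero_of_lt h0 hk (add_eq_left.1 h)

lemma add_natCast_ne_add_natCast (p : ZMod n) {a b : ℕ} (ha : a < n) (hb : b < n)
    (hab : a ≠ b) : p + a ≠ p + b := by
  rwa [Ne, add_left_cancel_iff, natCast_eq_natCast_iff', Nat.mod_eq_of_lt ha,
    Nat.mod_eq_of_lt hb]

lemma exists_eq_add_natCast [NeZero n] (p j : ZMod n) : ∃ e < n, j = p + e :=
  ⟨(j - p).val, val_lt _, by rw [natCast_zmod_val]; ring⟩

end ZMod

lemma NoFourConcyclic.eq_or_eq_or_eq {n : ℕ} [NeZero n] {V : ZMod n → ℂ}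
    (hgen : NoFourConcyclic V) {O : ℂ} {r : ℝ} {a b c j : ZMod n}
    (hab : a ≠ b) (hac : a ≠ c) (hbc : b ≠ c) (ha : dist O (V a) = r) (hb : dist O (V b) = r)
    (hc : dist O (V c) = r) (hj : dist O (V j) = r) : j = a ∨ j = b ∨ j = c := by
  by_contra! hne
  have hsub : ({j, a, b, c} : Set (ZMod n)) ⊆ {i | dist O (V i) = r} := by
    rintro i (rfl | rfl | rfl | rfl) <;> assumption
  have hcard : ({j, a, b, c} : Set (ZMod n)).ncard = 4 := by
    rw [Set.ncard_insert_of_notMem (by simp [hne.1, hne.2.1, hne.2.2]),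
      Set.ncard_insert_of_notMem (by simp [hab, hac]), Set.ncard_pair hbc]
  have := Set.ncard_le_ncard hsub (Set.toFinite _)
  have := hgen O r
  omega

lemma emptyNbrCircle_iff {n : ℕ} {V : ZMod n → ℂ} {i : ZMod n} :
    EmptyNbrCircle V i ↔ HasExtremalCircle 1 V {i - 1, i, i + 1} := by
  simp only [EmptyNbrCircle, HasExtremalCircle, Set.mem_insert_iff, Set.mem_singleton_iff,
    forall_eq_or_imp, forall_eq, not_or, one_mul, sub_pos, and_imp, and_assoc]

lemma fullNbrCircle_iff {n : ℕ} {V : ZMod n → ℂ} {i : ZMod n} :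
    FullNbrCircle V i ↔ HasExtremalCircle (-1) V {i - 1, i, i + 1} := by
  simp only [FullNbrCircle, HasExtremalCircle, Set.mem_insert_iff, Set.mem_singleton_iff,
    forall_eq_or_imp, forall_eq, not_or, neg_one_mul, neg_sub, sub_pos, and_imp, and_assoc]

namespace IsConvexPolygon

variable {n : ℕ} {V : ZMod n → ℂ}

lemma planeDet_succ_pos (hconv : IsConvexPolygon V) (p : ZMod n) {d : ℕ} (hd : 0 < d)
    (hdn : d + 1 < n) : 0 < planeDet (V (p + d) - V p) (V (p + (d + 1 : ℕ)) - V p) := by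
  rw [Nat.cast_succ, ← add_assoc, ← planeDet_sub_sub_rotate_s18]
  refine hconv (p + d) p (p.add_natCast_ne_self hd (by omega)).symm ?_
  rw [add_assoc, ← Nat.cast_succ]
  exact (p.add_natCast_ne_self d.succ_pos hdn).symm

/-- Seen from a vertex, the other vertices appear in their cyclic order. -/
lemma planeDet_pos (hconv : IsConvexPolygon V) (p : ZMod n) {e d : ℕ} (he : 0 < e) (hed : e < d)
    (hdn : d < n) : 0 < planeDet (V (p + e) - V p) (V (p + d) - V p) := by
  induction d, hed using Nat.le_induction with
  | base => exact hconv.planeDet_succ_pos p he hdn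
  | succ d hed ih =>
    have hleft : ∀ k : ℕ, 1 < k → k < n → 0 < planeDet (V (p + 1) - V p) (V (p + k) - V p) :=
      fun k hk hkn => hconv p (p + k) (p.add_natCast_ne_self (by omega) hkn)
        (by simpa using p.add_natCast_ne_add_natCast hkn (by omega : 1 < n) (by omega))
    have hfe : 0 ≤ planeDet (V (p + 1) - V p) (V (p + e) - V p) := by
      rcases Nat.lt_or_ge 1 e with he1 | he1
      · exact (hleft e he1 (by omega)).le
      · obtain rfl : e = 1 := by omega
        simp [planeDet, mul_comm]
    exact planeDet_pos_trans_s18 hfe (hleft d (by omega) (by omega)) (hleft (d + 1) (by omega) hdn)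
      (ih (by omega)) (hconv.planeDet_succ_pos p (by omega) hdn)

lemma planeDet_neg (hconv : IsConvexPolygon V) (p : ZMod n) {e d : ℕ} (he : 0 < e) (hed : e < d)
    (hdn : d < n) : planeDet (V (p + d) - V p) (V (p + e) - V p) < 0 := by
  rw [planeDet_swap, neg_lt_zero]
  exact hconv.planeDet_pos p he hed hdn

lemma not_emptyNbrCircle_and_fullNbrCircle (hn : 3 < n) (hconv : IsConvexPolygon V)
    (i : ZMod n) : ¬ (EmptyNbrCircle V i ∧ FullNbrCircle V i) := by
  rintro ⟨hE, hF⟩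
  have hdet := hconv.planeDet_pos (i - 1) (e := 1) (d := 2) one_pos one_lt_two (by omega)
  rw [show i - 1 + ((1 : ℕ) : ZMod n) = i by push_cast; ring,
    show i - 1 + ((2 : ℕ) : ZMod n) = i + 1 by push_cast; ring] at hdet
  obtain ⟨h10, h20, h21⟩ := ne_of_planeDet_sub_sub_pos hdet
  have h3 : i + 2 ∉ ({i - 1, i, i + 1} : Set (ZMod n)) := by
    simp only [Set.mem_insert_iff, Set.mem_singleton_iff, not_or]
    refine ⟨fun h => (i - 1).add_natCast_ne_self (k := 3) (by norm_num) hn ?_,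
      fun h => i.add_natCast_ne_self (k := 2) two_pos (by omega) ?_,
      fun h => (i + 1).add_natCast_ne_self (k := 1) one_pos (by omega) ?_⟩ <;>
    push_cast <;> linear_combination h
  exact (emptyNbrCircle_iff.1 hE).not_neg_one (by simp) (by simp) (by simp) h10.symm h20.symm
    h21.symm h3 (fullNbrCircle_iff.1 hF)

variable [NeZero n] {s : ℝ}

/-- Sliding the circle on a chord `p, p + d` inwards until it meets a vertex of the arc
between them, which by general position is the only new vertex on it. -/
lemma exists_hasExtremalCircle_triple (hconv : IsConvexPolygon V) (hgen : NoFourConcyclic V)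
    (hs : s ≠ 0) {p : ZMod n} {d : ℕ} (hd : 2 ≤ d) (hdn : d < n)
    (h : HasExtremalCircle s V {p, p + d}) :
    ∃ e : ℕ, 1 ≤ e ∧ e < d ∧ HasExtremalCircle s V {p, p + e, p + d} := by
  obtain ⟨O, r, hon, hsep⟩ := h
  obtain ⟨-, hqp, -⟩ := ne_of_planeDet_sub_sub_pos (hconv.planeDet_pos p one_pos hd hdn)
  obtain ⟨u₀, rfl⟩ := exists_pencilCenter_eq hqp.symm
    (by rw [hon p (by simp), hon (p + d) (by simp)])
  obtain rfl := hon p (by simp)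
  have hp1 : p + (1 : ℕ) ∉ ({p, p + d} : Set (ZMod n)) := by
    simp only [Set.mem_insert_iff, Set.mem_singleton_iff, not_or]
    exact ⟨p.add_natCast_ne_self one_pos (by omega),
      p.add_natCast_ne_add_natCast (by omega) hdn (by omega)⟩
  obtain ⟨u, j₀, hj₀S, hj₀, hj₀u, hu⟩ := exists_pencilPower_eq_zero_of_pos V {p, p + d}ᶜ
    (V p) (V (p + d)) (fun j hj => pos_mul_pencilPower_iff.2 (hsep j hj))
    ⟨_, hp1, hconv.planeDet_neg p one_pos hd hdn⟩
  obtain ⟨e, hen, rfl⟩ := ZMod.exists_eq_add_natCast p j₀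
  simp only [Set.mem_compl_iff, Set.mem_insert_iff, Set.mem_singleton_iff, not_or] at hj₀S
  have he : 0 < e := Nat.pos_of_ne_zero fun h => hj₀S.1 (by simp [h])
  have hed : e < d := by
    by_contra! hed
    have hde : d < e := hed.lt_of_ne fun h => hj₀S.2 (by rw [h])
    exact (hconv.planeDet_pos p (by omega) hde hen).not_gt hj₀
  refine ⟨e, he, hed, pencilCenter (V p) (V (p + d)) u,
    dist (pencilCenter (V p) (V (p + d)) u) (V p), ?_, fun j hj => ?_⟩
  · rintro i (rfl | rfl | rfl)
    · rfl
    · exact pencilPower_eq_zero_iff.1 hj₀u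
    · exact dist_pencilCenter_right _ _ _
  simp only [Set.mem_insert_iff, Set.mem_singleton_iff, not_or] at hj
  refine pos_mul_pencilPower_iff.1 ((hu j (by simp [hj.1, hj.2.2])).lt_of_ne' ?_)
  refine mul_ne_zero hs fun h0 => ?_
  rcases hgen.eq_or_eq_or_eq (p.add_natCast_ne_self he hen).symm
    (p.add_natCast_ne_self (by omega) hdn).symm (p.add_natCast_ne_add_natCast hen hdn hed.ne)
    rfl (pencilPower_eq_zero_iff.1 hj₀u) (dist_pencilCenter_right _ _ _)
    (pencilPower_eq_zero_iff.1 h0) with h | h | h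
  exacts [hj.1 h, hj.2.1 h, hj.2.2 h]

lemma exists_hasExtremalCircle_nbr_of_chord (hconv : IsConvexPolygon V)
    (hgen : NoFourConcyclic V) (hs : s ≠ 0) {d : ℕ} (hd : 2 ≤ d) (hdn : d < n) {p : ZMod n}
    (h : HasExtremalCircle s V {p, p + d}) :
    ∃ e : ℕ, 1 ≤ e ∧ e < d ∧ HasExtremalCircle s V {p + e - 1, p + e, p + e + 1} := by
  induction d using Nat.strong_induction_on generalizing p with
  | _ d ih =>
  obtain ⟨e₀, he₀, he₀d, htri⟩ := hconv.exists_hasExtremalCircle_triple hgen hs hd hdn h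
  rcases Nat.lt_or_ge 1 e₀ with h1e₀ | h1e₀
  · obtain ⟨e, he, hee₀, hnbr⟩ := ih e₀ he₀d h1e₀ (by omega)
      (htri.pair_of_triple hs (hconv.planeDet_pos p (by omega) he₀d hdn))
    exact ⟨e, he, hee₀.trans he₀d, hnbr⟩
  obtain rfl : e₀ = 1 := by omega
  rw [Nat.cast_one] at htri
  rcases Nat.lt_or_ge 2 d with hd2 | hd2
  · have hq : p + 1 + ((d - 1 : ℕ) : ZMod n) = p + d := by
      rw [Nat.cast_sub (by omega)]; ring
    have hp : p + 1 + ((n - 1 : ℕ) : ZMod n) = p := by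
      rw [Nat.cast_sub (by omega), ZMod.natCast_self]; ring
    have hdet := hconv.planeDet_pos (p + 1) (e := d - 1) (d := n - 1) (by omega) (by omega)
      (by omega)
    rw [hq, hp] at hdet
    rw [Set.insert_comm, Set.pair_comm] at htri
    obtain ⟨e, he, hed, hnbr⟩ := ih (d - 1) (by omega) (by omega) (by omega)
      (by rw [hq]; exact htri.pair_of_triple hs hdet)
    refine ⟨e + 1, by omega, by omega, ?_⟩
    rwa [Nat.cast_succ, add_comm (e : ZMod n), ← add_assoc]
  · obtain rfl : d = 2 := by omega
    refine ⟨1, le_rfl, by omega, ?_⟩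
    convert htri using 2 <;> push_cast <;> ring_nf

lemma hasExtremalCircle_edge (hconv : IsConvexPolygon V) (hs : s ≠ 0) (i : ZMod n) :
    HasExtremalCircle s V {i, i + 1} :=
  hasExtremalCircle_pair hs fun j hj => by
    simp only [Set.mem_insert_iff, Set.mem_singleton_iff, not_or] at hj
    exact hconv i j hj.1 hj.2

lemma one_lt_ncard_hasExtremalCircle_nbr (hn : 3 < n) (hconv : IsConvexPolygon V)
    (hgen : NoFourConcyclic V) (hs : s ≠ 0) :
    1 < {i : ZMod n | HasExtremalCircle s V {i - 1, i, i + 1}}.ncard := by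
  rw [Set.one_lt_ncard_iff]
  have hedge : HasExtremalCircle s V {1, 1 + ((n - 1 : ℕ) : ZMod n)} := by
    rw [Nat.cast_sub (by omega), ZMod.natCast_self, Set.pair_comm]
    simpa using hconv.hasExtremalCircle_edge hs 0
  obtain ⟨e₁, -, -, hnbr₁⟩ :=
    hconv.exists_hasExtremalCircle_nbr_of_chord hgen hs (by omega) (by omega) hedge
  set i₁ : ZMod n := 1 + e₁
  have hprev : i₁ + 1 + ((n - 2 : ℕ) : ZMod n) = i₁ - 1 := by
    rw [Nat.cast_sub (by omega), ZMod.natCast_self]; ring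
  have hself : i₁ + 1 + ((n - 1 : ℕ) : ZMod n) = i₁ := by
    rw [Nat.cast_sub (by omega), ZMod.natCast_self]; ring
  have hdet := hconv.planeDet_pos (i₁ + 1) (e := n - 2) (d := n - 1) (by omega) (by omega)
    (by omega)
  rw [hprev, hself] at hdet
  have hchord : HasExtremalCircle s V {i₁ + 1, i₁ + 1 + ((n - 2 : ℕ) : ZMod n)} := by
    rw [hprev]
    refine HasExtremalCircle.pair_of_triple hs hdet ?_
    rwa [Set.insert_comm, Set.pair_comm]
  obtain ⟨e₂, he₂, he₂n, hnbr₂⟩ :=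
    hconv.exists_hasExtremalCircle_nbr_of_chord hgen hs (by omega) (by omega) hchord
  refine ⟨i₁, i₁ + 1 + e₂, hnbr₁, hnbr₂, fun h => ?_⟩
  apply (i₁ + 1).add_natCast_ne_add_natCast (a := e₂) (b := n - 1) (by omega) (by omega)
    (by omega)
  rw [hself, ← h]

end IsConvexPolygon

theorem equilateral_sedykh_general (n : ℕ) [NeZero n] (hn : 3 < n) (V : ZMod n → ℂ)
    (hconv : IsConvexPolygon V) (hgen : NoFourConcyclic V) :
    (∀ i : ZMod n, ∃ (O : ℂ) (r : ℝ), dist O (V i) = r ∧ dist O (V (i + 1)) = r ∧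
      ∀ j : ZMod n, j ≠ i → j ≠ i + 1 → r < dist O (V j)) ∧
    4 ≤ Set.ncard {i : ZMod n | EmptyNbrCircle V i ∨ FullNbrCircle V i} := by
  refine ⟨fun i => ?_, ?_⟩
  · obtain ⟨O, r, hon, hsep⟩ := hconv.hasExtremalCircle_edge one_ne_zero i
    refine ⟨O, r, hon i (by simp), hon (i + 1) (by simp), fun j hj hj' => ?_⟩
    simpa using hsep j (by simp [hj, hj'])
  · have hdisj : Disjoint {i | EmptyNbrCircle V i} {i | FullNbrCircle V i} :=
      Set.disjoint_left.2 fun i hE hF =>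
        hconv.not_emptyNbrCircle_and_fullNbrCircle hn i ⟨hE, hF⟩
    have hE := hconv.one_lt_ncard_hasExtremalCircle_nbr hn hgen one_ne_zero
    have hF := hconv.one_lt_ncard_hasExtremalCircle_nbr hn hgen (neg_ne_zero.2 one_ne_zero)
    simp only [← emptyNbrCircle_iff, ← fullNbrCircle_iff] at hE hF
    rw [Set.ofPred_or, Set.ncard_union_eq hdisj]
    omega

/-- **Sedykh's theorem for equilateral polygons.** In an equilateral convex
polygon with no four vertices concyclic, every two neighboring vertices lie on a circle empty
of the other vertices, and at least four of the neighboring circles `Cᵢ` are extremal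
(empty or full). -/
theorem equilateral_sedykh (n : ℕ) [NeZero n] (hn : 3 < n) (V : ZMod n → ℂ)
    (hconv : IsConvexPolygon V) (hgen : NoFourConcyclic V)
    (hequi : ∀ i j : ZMod n, dist (V i) (V (i + 1)) = dist (V j) (V (j + 1))) :
    (∀ i : ZMod n, ∃ (O : ℂ) (r : ℝ), dist O (V i) = r ∧ dist O (V (i + 1)) = r ∧
      ∀ j : ZMod n, j ≠ i → j ≠ i + 1 → r < dist O (V j)) ∧
    4 ≤ Set.ncard {i : ZMod n | EmptyNbrCircle V i ∨ FullNbrCircle V i} :=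
  equilateral_sedykh_general n hn V hconv hgen
end

section
/- For any point p strictly outside a strictly convex polygon Γ in the plane, there are exactly two tangent lines from p to Γ, i.e., exactly two vertices V of Γ such that both neighbors of V lie strictly on one side of the line through p and V. -/
/-- The line through `p` and `V i` is tangent to the polygonal line `V`: both neighbours of
`V i` lie strictly on one side of it. -/
def IsTangentVertex {n : ℕ} (V : ZMod n → ℂ) (p : ℂ) (i : ZMod n) : Prop :=
  (0 < planeDet (V i - p) (V (i - 1) - p) ∧ 0 < planeDet (V i - p) (V (i + 1) - p)) ∨
  (planeDet (V i - p) (V (i - 1) - p) < 0 ∧ planeDet (V i - p) (V (i + 1) - p) < 0)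

/-!
Separate `p` from the polygon by a line and rotate so that every `V j - p` has positive real
part. On that half-plane the sign of `planeDet (V i - p) (V j - p)` is the sign of `t j - t i`,
where `t` is the slope `im / re`; general position makes `t` injective, and the tangent vertices
are exactly the strict local extrema of `t` along the cycle. By convexity, if both neighbours of
`V i` lie on one side of the line through `p` and `V i`, so does every other vertex: a local
extremum of `t` is global. Hence the tangent vertices are the argmin and the argmax of `t`.
-/

open Complex ComplexConjugate

lemma planeDet_mul_mul (m u v : ℂ) : planeDet (m * u) (m * v) = normSq m * planeDet u v := by
  simp only [planeDet, normSq_apply, mul_re, mul_im]; ring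

lemma planeDet_eq_mul_sub_div {u v : ℂ} (hu : u.re ≠ 0) (hv : v.re ≠ 0) :
    planeDet u v = u.re * v.re * (v.im / v.re - u.im / u.re) := by
  simp only [planeDet]; field_simp

lemma mul_planeDet_mul_pos_iff_of_re_pos {u v w : ℂ} (hu : 0 < u.re) (hv : 0 < v.re)
    (hw : 0 < w.re) :
    0 < planeDet u v * planeDet u w ↔
      0 < (v.im / v.re - u.im / u.re) * (w.im / w.re - u.im / u.re) := by
  rw [planeDet_eq_mul_sub_div hu.ne' hv.ne', planeDet_eq_mul_sub_div hu.ne' hw.ne',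
    mul_mul_mul_comm, mul_pos_iff_of_pos_left (by positivity)]

lemma mul_planeDet_mul_pos_iff {m : ℂ} (hm : m ≠ 0) (u v w : ℂ) :
    0 < planeDet (m * u) (m * v) * planeDet (m * u) (m * w) ↔
      0 < planeDet u v * planeDet u w := by
  rw [planeDet_mul_mul, planeDet_mul_mul, mul_mul_mul_comm,
    mul_pos_iff_of_pos_left (mul_self_pos.mpr (normSq_pos.mpr hm).ne')]

lemma collinear_of_planeDet_sub_eq_zero {p a b : ℂ} (h : planeDet (a - p) (b - p) = 0) :
    Collinear ℝ ({p, a, b} : Set ℂ) := by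
  rcases eq_or_ne a p with rfl | ha
  · simpa using collinear_pair ℝ a b
  set u := a - p
  set v := b - p
  have hu : u.re * u.re + u.im * u.im ≠ 0 := by
    rw [← normSq_apply]; exact normSq_eq_zero.not.mpr (sub_ne_zero.mpr ha)
  -- `v` is its own orthogonal projection onto `ℝ u`
  have hv : v = ((u.re * v.re + u.im * v.im) / (u.re * u.re + u.im * u.im)) • u := by
    simp only [planeDet] at h
    apply Complex.ext <;>
      simp only [real_smul, mul_re, mul_im, ofReal_re, ofReal_im, zero_mul, sub_zero, add_zero] <;>
      rw [div_mul_eq_mul_div, eq_div_iff hu]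
    · linear_combination (-u.im) * h
    · linear_combination u.re * h
  rw [collinear_iff_of_mem (Set.mem_insert p _)]
  refine ⟨u, ?_⟩
  rintro q (rfl | rfl | rfl)
  · exact ⟨0, by simp⟩
  · exact ⟨1, by simp [u]⟩
  · exact ⟨_, by rw [vadd_eq_add, ← hv]; simp [v]⟩

lemma exists_forall_re_mul_sub_pos {s : Set ℂ} (hs : Convex ℝ s) (hc : IsClosed s) {p : ℂ}
    (hp : p ∉ s) : ∃ m : ℂ, ∀ z ∈ s, 0 < (m * (z - p)).re := by
  obtain ⟨f, u, hfs, hup⟩ := geometric_hahn_banach_closed_point hs hc hp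
  set a := (InnerProductSpace.toDual ℝ ℂ).symm f
  refine ⟨-conj a, fun z hz => ?_⟩
  have hre : (-conj a * (z - p)).re = f p - f z := by
    rw [← InnerProductSpace.toDual_symm_apply, ← InnerProductSpace.toDual_symm_apply,
      Complex.inner, Complex.inner]
    simp only [neg_mul, neg_re, mul_re, sub_re, sub_im, conj_re, conj_im]; ring
  linarith [hfs z hz]

namespace ZMod

variable {n : ℕ}

lemma add_one_ne_self (hn : 2 ≤ n) (i : ZMod n) : i + 1 ≠ i := by
  have : Fact (1 < n) := ⟨hn⟩
  simp

lemma sub_one_ne_self (hn : 2 ≤ n) (i : ZMod n) : i - 1 ≠ i := by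
  have : Fact (1 < n) := ⟨hn⟩
  simp

lemma add_one_ne_sub_one (hn : 3 ≤ n) (i : ZMod n) : i + 1 ≠ i - 1 := by
  intro h
  have h2 : ((2 : ℕ) : ZMod n) = 0 := by push_cast; linear_combination h
  have := Nat.le_of_dvd two_pos ((ZMod.natCast_eq_zero_iff 2 n).mp h2)
  omega

end ZMod

section Polygon

variable {n : ℕ} {V : ZMod n → ℂ} {p : ℂ} {i : ZMod n}

lemma isTangentVertex_iff_mul_pos :
    IsTangentVertex V p i ↔
      0 < planeDet (V i - p) (V (i - 1) - p) * planeDet (V i - p) (V (i + 1) - p) :=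
  mul_pos_iff.symm

lemma IsConvexPolygon.planeDet_mul_pos_of_isTangentVertex (hconv : IsConvexPolygon V)
    (hn : 3 ≤ n) (htan : IsTangentVertex V p i) {j : ZMod n} (hji : j ≠ i) :
    0 < planeDet (V i - p) (V j - p) * planeDet (V i - p) (V (i + 1) - p) := by
  rw [isTangentVertex_iff_mul_pos] at htan
  rcases eq_or_ne j (i - 1) with rfl | hj₁
  · exact htan
  rcases eq_or_ne j (i + 1) with rfl | hj₂
  · exact mul_self_pos.mpr (right_ne_zero_of_mul htan.ne')
  have hC := hconv (i - 1) (i + 1) (ZMod.add_one_ne_sub_one hn i)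
    (by rw [sub_add_cancel]; exact ZMod.add_one_ne_self (by omega) i)
  have hA := hconv (i - 1) j hj₁ (by rwa [sub_add_cancel])
  have hB := hconv i j hji hj₂
  rw [sub_add_cancel] at hC hA
  set X := planeDet (V i - p) (V (i - 1) - p)
  set Y := planeDet (V i - p) (V (i + 1) - p)
  set Z := planeDet (V i - p) (V j - p)
  -- Grassmann–Plücker relation for the four points `p`, `V (i - 1)`, `V i`, `V j`
  have hid : Z * planeDet (V i - V (i - 1)) (V (i + 1) - V (i - 1)) =
      planeDet (V (i + 1) - V i) (V j - V i) * X +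
        planeDet (V i - V (i - 1)) (V j - V (i - 1)) * Y := by
    simp only [X, Y, Z, planeDet, sub_re, sub_im]; ring
  have hZYC : 0 < Z * Y * planeDet (V i - V (i - 1)) (V (i + 1) - V (i - 1)) := by
    rw [mul_right_comm, hid, add_mul, mul_assoc, mul_assoc]
    exact add_pos_of_pos_of_nonneg (mul_pos hB htan) (mul_nonneg hA.le (mul_self_nonneg Y))
  exact pos_of_mul_pos_left hZYC hC.le

end Polygon

lemma ncard_strictLocalExtr_eq_two {n : ℕ} [NeZero n] (hn : 2 ≤ n) {t : ZMod n → ℝ}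
    (ht : Function.Injective t)
    (hglobal : ∀ i j, j ≠ i → 0 < (t (i - 1) - t i) * (t (i + 1) - t i) →
      0 < (t j - t i) * (t (i + 1) - t i)) :
    {i | 0 < (t (i - 1) - t i) * (t (i + 1) - t i)}.ncard = 2 := by
  obtain ⟨iMax, hMax⟩ := Finite.exists_max t
  obtain ⟨iMin, hMin⟩ := Finite.exists_min t
  have hMax' : ∀ j ≠ iMax, t j < t iMax := fun j hj => (hMax j).lt_of_ne (ht.ne hj)
  have hMin' : ∀ j ≠ iMin, t iMin < t j := fun j hj => (hMin j).lt_of_ne (ht.ne hj.symm)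
  have hne : iMin ≠ iMax := by
    rintro rfl
    exact (hMax' _ (ZMod.add_one_ne_self hn iMin)).not_ge (hMin _)
  suffices {i | 0 < (t (i - 1) - t i) * (t (i + 1) - t i)} = {iMin, iMax} by
    rw [this, Set.ncard_pair hne]
  ext i
  constructor
  · intro hi
    by_contra! h
    simp only [Set.mem_insert_iff, Set.mem_singleton_iff, not_or] at h
    have hright : 0 < t (i + 1) - t i :=
      pos_of_mul_pos_right (hglobal i iMax (Ne.symm h.2) hi) (sub_pos.mpr (hMax' i h.2)).le
    exact (mul_neg_of_neg_of_pos (sub_neg.mpr (hMin' i h.1)) hright).not_gt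
      (hglobal i iMin (Ne.symm h.1) hi)
  · rintro (rfl | rfl)
    · exact mul_pos (sub_pos.mpr (hMin' _ (ZMod.sub_one_ne_self hn _)))
        (sub_pos.mpr (hMin' _ (ZMod.add_one_ne_self hn _)))
    · exact mul_pos_of_neg_of_neg (sub_neg.mpr (hMax' _ (ZMod.sub_one_ne_self hn _)))
        (sub_neg.mpr (hMax' _ (ZMod.add_one_ne_self hn _)))

/-- From any point strictly outside a strictly convex polygon (in general
position with respect to its vertices) there are exactly two tangent lines to the polygon. -/
theorem two_tangent_lines (n : ℕ) [NeZero n] (hn : 3 ≤ n) (V : ZMod n → ℂ) (p : ℂ)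
    (hconv : IsConvexPolygon V)
    (hout : p ∉ convexHull ℝ (Set.range V))
    (hgen : ∀ i j : ZMod n, i ≠ j → ¬Collinear ℝ ({p, V i, V j} : Set ℂ)) :
    Set.ncard {i : ZMod n | IsTangentVertex V p i} = 2 := by
  obtain ⟨m, hm⟩ := exists_forall_re_mul_sub_pos (convex_convexHull ℝ _)
    ((Set.finite_range V).isCompact_convexHull ℝ).isClosed hout
  have hpos : ∀ j, 0 < (m * (V j - p)).re := fun j => hm _ (subset_convexHull ℝ _ ⟨j, rfl⟩)
  have hm₀ : m ≠ 0 := by rintro rfl; simpa using hpos 0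
  set t : ZMod n → ℝ := fun j => (m * (V j - p)).im / (m * (V j - p)).re
  have hside : ∀ i j k, 0 < planeDet (V i - p) (V j - p) * planeDet (V i - p) (V k - p) ↔
      0 < (t j - t i) * (t k - t i) := fun i j k =>
    (mul_planeDet_mul_pos_iff hm₀ _ _ _).symm.trans
      (mul_planeDet_mul_pos_iff_of_re_pos (hpos i) (hpos j) (hpos k))
  have ht : Function.Injective t := by
    intro i j hij
    by_contra hne
    have hdet : planeDet (V i - p) (V j - p) ≠ 0 :=
      fun h => hgen i j hne (collinear_of_planeDet_sub_eq_zero h)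
    have := (hside i j j).mp (mul_self_pos.mpr hdet)
    simp [hij] at this
  have htan : ∀ i, IsTangentVertex V p i ↔ 0 < (t (i - 1) - t i) * (t (i + 1) - t i) :=
    fun i => isTangentVertex_iff_mul_pos.trans (hside _ _ _)
  simp_rw [htan]
  exact ncard_strictLocalExtr_eq_two (by omega) ht fun i j hji hi =>
    (hside _ _ _).mp (hconv.planeDet_mul_pos_of_isTangentVertex hn ((htan i).mpr hi) hji)
end
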